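/- arXiv:2404.19229 — 7 statements merged into one kernel-verified Lean document; each statement's English description precedes it below -/
import Mathlib

section
/- Let A be a nondegenerate n×n Hermitian matrix over ℂ such that every leading principal l×l submatrix of A is nondegenerate (invertible) for 1 ≤ l ≤ n. Then A is *-congruent to the diagonal matrix D = diag(M₁, M₂/M₁, ..., M_n/M_{n-1}), where M_l denotes the leading principal l×l minor of A (and M₀ = 1); i.e., there exists an invertible matrix P with A = P* D P. -/
/-! Induction on `n` via the Schur complement. Split off the last row and column of `A`,
with leading block `B`. Because `A` is Hermitian, the block factorisation
`A = Uᴴ (B ⊕ S) U` has `U` unitriangular, and the `1 × 1` Schur complement `S` is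
`det A / det B = M n / M (n - 1)`. The induction hypothesis diagonalises `B`. -/

open Matrix

namespace Matrix

variable {K : Type*} [Field K] [StarRing K]
  {m n : Type*} [Fintype m] [Fintype n] [DecidableEq m] [DecidableEq n]

def StarCongruent (A D : Matrix n n K) : Prop :=
  ∃ P : Matrix n n K, IsUnit P.det ∧ A = Pᴴ * D * P

namespace StarCongruent

theorem refl (A : Matrix n n K) : StarCongruent A A :=
  ⟨1, by simp, by simp⟩

theorem trans {A B C : Matrix n n K} (hAB : StarCongruent A B) (hBC : StarCongruent B C) :
    StarCongruent A C := by
  obtain ⟨P, hP, rfl⟩ := hAB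
  obtain ⟨Q, hQ, rfl⟩ := hBC
  refine ⟨Q * P, by simpa [det_mul] using hQ.mul hP, ?_⟩
  simp only [conjTranspose_mul, Matrix.mul_assoc]

theorem submatrix {A D : Matrix n n K} (h : StarCongruent A D) (e : m ≃ n) :
    StarCongruent (A.submatrix e e) (D.submatrix e e) := by
  obtain ⟨P, hP, rfl⟩ := h
  refine ⟨P.submatrix e e, by rwa [det_submatrix_equiv_self], ?_⟩
  rw [conjTranspose_submatrix, submatrix_mul_equiv, submatrix_mul_equiv]

theorem fromBlocks_zero {A D : Matrix m m K} {B E : Matrix n n K}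
    (hAD : StarCongruent A D) (hBE : StarCongruent B E) :
    StarCongruent (fromBlocks A 0 0 B) (fromBlocks D 0 0 E) := by
  obtain ⟨P, hP, rfl⟩ := hAD
  obtain ⟨Q, hQ, rfl⟩ := hBE
  refine ⟨fromBlocks P 0 0 Q, by simpa [det_fromBlocks_zero₂₁] using hP.mul hQ, ?_⟩
  simp [fromBlocks_conjTranspose, fromBlocks_multiply]

end StarCongruent

theorem starCongruent_fromBlocks_schur {B : Matrix m m K} (hB : B.IsHermitian)
    (hdet : IsUnit B.det) (c : Matrix m n K) (d : Matrix n n K) :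
    StarCongruent (fromBlocks B c cᴴ d) (fromBlocks B 0 0 (d - cᴴ * B⁻¹ * c)) := by
  let := invertibleOfIsUnitDet _ hdet
  have hU : (fromBlocks 1 (B⁻¹ * c) 0 1 : Matrix (m ⊕ n) (m ⊕ n) K)ᴴ =
      fromBlocks 1 0 (cᴴ * B⁻¹) 1 := by
    simp [fromBlocks_conjTranspose, conjTranspose_nonsing_inv, hB.eq]
  refine ⟨fromBlocks 1 (B⁻¹ * c) 0 1, by simp, ?_⟩
  rw [hU, fromBlocks_eq_of_invertible₁₁ B c cᴴ d, invOf_eq_nonsing_inv]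

theorem IsHermitian.starCongruent_fromBlocks_det_div {m : ℕ}
    {A : Matrix (Fin (m + 1)) (Fin (m + 1)) K} (hA : A.IsHermitian)
    (hB : IsUnit (A.submatrix Fin.castSucc Fin.castSucc).det) :
    StarCongruent (A.submatrix finSumFinEquiv finSumFinEquiv)
      (Matrix.fromBlocks (A.submatrix Fin.castSucc Fin.castSucc) 0 0
        (diagonal fun _ : Fin 1 => A.det / (A.submatrix Fin.castSucc Fin.castSucc).det)) := by
  set A' := A.submatrix finSumFinEquiv finSumFinEquiv
  have hblocks :
      A' = Matrix.fromBlocks A'.toBlocks₁₁ A'.toBlocks₁₂ A'.toBlocks₁₂ᴴ A'.toBlocks₂₂ := by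
    have h := fromBlocks_toBlocks A'
    have hA' : A'.IsHermitian := hA.submatrix _
    rw [← h] at hA'
    rw [(isHermitian_fromBlocks_iff.mp hA').2.1]
    exact h.symm
  have h₁₁ : A'.toBlocks₁₁ = A.submatrix Fin.castSucc Fin.castSucc := rfl
  set S := A'.toBlocks₂₂ - A'.toBlocks₁₂ᴴ * A'.toBlocks₁₁⁻¹ * A'.toBlocks₁₂
  have hdet : A.det = A'.toBlocks₁₁.det * S 0 0 := by
    let := invertibleOfIsUnitDet A'.toBlocks₁₁ hB
    rw [← det_submatrix_equiv_self finSumFinEquiv A, ← det_fin_one S]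
    change A'.det = _
    conv_lhs => rw [hblocks]
    rw [det_fromBlocks₁₁, invOf_eq_nonsing_inv]
  have hS : S = diagonal fun _ => A.det / (A.submatrix Fin.castSucc Fin.castSucc).det := by
    ext i j
    rw [Subsingleton.elim i 0, Subsingleton.elim j 0, diagonal_apply_eq, hdet]
    exact (mul_div_cancel_left₀ _ hB.ne_zero).symm
  rw [← hS, ← h₁₁, hblocks]
  exact starCongruent_fromBlocks_schur (h₁₁ ▸ hA.submatrix _) (h₁₁ ▸ hB) _ _

theorem IsHermitian.starCongruent_diagonal_leadingMinor_div {n : ℕ}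
    {A : Matrix (Fin n) (Fin n) K} (hA : A.IsHermitian) {M : ℕ → K}
    (hM : ∀ l (hl : l ≤ n), M l = (A.submatrix (Fin.castLE hl) (Fin.castLE hl)).det)
    (hM_ne : ∀ l, 1 ≤ l → l < n → M l ≠ 0) :
    StarCongruent A (diagonal fun i : Fin n => M (i + 1) / M i) := by
  induction n with
  | zero => exact ⟨1, by simp, Subsingleton.elim _ _⟩
  | succ m ih =>
    set B := A.submatrix Fin.castSucc Fin.castSucc
    have hMB : ∀ l (hl : l ≤ m), M l = (B.submatrix (Fin.castLE hl) (Fin.castLE hl)).det :=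
      fun l hl => hM l (hl.trans m.le_succ)
    have hBdet : B.det = M m := (hMB m le_rfl).symm
    have hAdet : A.det = M (m + 1) := (hM (m + 1) le_rfl).symm
    have hBunit : IsUnit B.det := by
      rcases Nat.eq_zero_or_pos m with rfl | hm
      · simp [B]
      · exact hBdet ▸ (hM_ne m hm m.lt_succ_self).isUnit
    have hB := ih (hA.submatrix _) hMB fun l h1 h2 => hM_ne l h1 (h2.trans m.lt_succ_self)
    have hA' := (hA.starCongruent_fromBlocks_det_div hBunit).trans (hB.fromBlocks_zero (.refl _))
    rw [fromBlocks_diagonal, hAdet, hBdet] at hA'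
    convert hA'.submatrix finSumFinEquiv.symm using 1
    · simp
    · rw [submatrix_diagonal_equiv]
      congr 1
      funext i
      induction i using Fin.lastCases <;> simp

end Matrix

theorem hermitian_star_congruent_diagonal_of_leading_minors_ne_zero_general
    (n : ℕ) (A : Matrix (Fin n) (Fin n) ℂ) (hA : A.IsHermitian)
    (M : ℕ → ℂ)
    (hM : ∀ l : ℕ, ∀ hl : l ≤ n,
      M l = (A.submatrix (Fin.castLE hl) (Fin.castLE hl)).det)
    (hnd : ∀ l : ℕ, 1 ≤ l → l ≤ n → M l ≠ 0) :
    ∃ P : Matrix (Fin n) (Fin n) ℂ, IsUnit P.det ∧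
      A = Pᴴ * Matrix.diagonal (fun i : Fin n => M ((i : ℕ) + 1) / M (i : ℕ)) * P :=
  hA.starCongruent_diagonal_leadingMinor_div hM fun l h1 h2 => hnd l h1 h2.le

/-- A nondegenerate Hermitian matrix all of whose leading principal minors are nonzero
is *-congruent to the diagonal matrix of successive ratios of leading principal minors. -/
theorem hermitian_star_congruent_diagonal_of_leading_minors_ne_zero
    (n : ℕ) (A : Matrix (Fin n) (Fin n) ℂ) (hA : A.IsHermitian)
    (M : ℕ → ℂ) (hM0 : M 0 = 1)
    (hM : ∀ l : ℕ, ∀ hl : l ≤ n,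
      M l = (A.submatrix (Fin.castLE hl) (Fin.castLE hl)).det)
    (hnd : ∀ l : ℕ, 1 ≤ l → l ≤ n → M l ≠ 0) :
    ∃ P : Matrix (Fin n) (Fin n) ℂ, IsUnit P.det ∧
      A = Pᴴ * Matrix.diagonal (fun i : Fin n => M ((i : ℕ) + 1) / M (i : ℕ)) * P :=
  hermitian_star_congruent_diagonal_of_leading_minors_ne_zero_general n A hA M hM hnd
end

section
/- For integers n ≥ 0 and 0 ≤ k ≤ n+1, let A_{n-k+1,k}(x) be the k×k matrix whose (r,s) entry (0 ≤ r,s ≤ k-1) is x^{n-k+1+s-r}/(n-k+1+s-r)! when n-k+1+s-r ≥ 0, and 0 otherwise (this is the upper-right k×k block of the (n+1)×(n+1) unipotent upper triangular matrix with (i,j) entry x^{j-i}/(j-i)!). Then det(A_{n-k+1,k}(x)) = (C_{n-k+1,k}/((n-k+1)k)!) · x^{(n-k+1)k}, where C_{n-k+1,k} is the number of standard Young tableaux of rectangular shape k × (n-k+1). -/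
/-- The number of standard Young tableaux of rectangular shape with `b` rows and
`a` columns. -/
noncomputable def rectSYTCard (a b : ℕ) : ℕ :=
  Nat.card {f : Fin b × Fin a → Fin (b * a) //
    Function.Bijective f ∧
    (∀ (i : Fin b) (j j' : Fin a), j < j' → f (i, j) < f (i, j')) ∧
    (∀ (i i' : Fin b) (j : Fin a), i < i' → f (i, j) < f (i', j))}

/-!
Let `D(μ) = aitkenDet μ = det (1 / (μ r + s - r)!)`, with `1 / m! = 0` for `m < 0`. Expanding
the determinant and using `1 / (m - 1)! = m / m!` in one factor of each term gives
`(∑ μ) · D(μ) = ∑_j D(μ - e_j)`. For a partition `λ`, the term `D(λ - e_j)` vanishes (two equal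
rows, or a zero row) unless the last cell of row `j` is a removable corner. Deleting the cell
carrying the largest entry shows that the number `f^λ` of standard Young tableaux obeys the same
recursion `f^λ = ∑_{corners j} f^{λ - e_j}`, so `f^λ = |λ|! · D(λ)` (Frobenius–Young). The block in
the statement has entries `x^m / m!` with `m = a + s - r`, `a = n - k + 1`, and every term of its
determinant has total degree `a k`, so it equals `x^{ak} · D(a, …, a)`.
-/

open Finset Function

namespace Aitken

noncomputable def invFactorial (m : ℤ) : ℚ :=
  if 0 ≤ m then (m.toNat.factorial : ℚ)⁻¹ else 0

lemma invFactorial_sub_one (m : ℤ) : invFactorial (m - 1) = m * invFactorial m := by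
  unfold invFactorial
  rcases lt_trichotomy m 0 with h | rfl | h
  · rw [if_neg (by omega), if_neg (by omega), mul_zero]
  · simp
  · obtain ⟨n, rfl⟩ : ∃ n : ℕ, m = n + 1 := ⟨m.toNat - 1, by omega⟩
    rw [if_pos (by omega), if_pos (by omega), show ((n : ℤ) + 1 - 1).toNat = n by omega,
      show ((n : ℤ) + 1).toNat = n + 1 by omega, Nat.factorial_succ]
    push_cast
    field_simp

lemma prod_invFactorial_update_sub_one {ι : Type*} [Fintype ι] [DecidableEq ι]
    (e : ι → ℤ) (j : ι) :
    ∏ i, invFactorial (update e j (e j - 1) i) = e j * ∏ i, invFactorial (e i) := by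
  simp only [apply_update (fun _ => invFactorial), prod_update_of_mem (mem_univ j),
    invFactorial_sub_one, Fintype.prod_eq_mul_prod_compl j (fun i => invFactorial (e i)),
    compl_eq_univ_sdiff, mul_assoc]

variable {k : ℕ}

noncomputable def aitkenDet (μ : Fin k → ℤ) : ℚ :=
  (Matrix.of fun r s : Fin k => invFactorial (μ r + s - r)).det

lemma aitkenDet_eq_zero_of_sub_eq (μ : Fin k → ℤ) {i j : Fin k} (hij : i ≠ j)
    (h : μ i - i = μ j - j) : aitkenDet μ = 0 :=
  Matrix.det_zero_of_row_eq hij <| funext fun s => by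
    simp only [Matrix.of_apply]
    congr 1
    omega

lemma aitkenDet_eq_zero_of_lt (μ : Fin k → ℤ) (i : Fin k) (h : μ i + (k - 1) - i < 0) :
    aitkenDet μ = 0 :=
  Matrix.det_eq_zero_of_row_eq_zero i fun s => by
    have := s.2
    simp only [Matrix.of_apply, invFactorial]
    rw [if_neg (by omega)]

lemma aitkenDet_zero : aitkenDet (fun _ : Fin k => (0 : ℤ)) = 1 := by
  rw [aitkenDet, Matrix.det_of_isUpperTriangular]
  · simp [invFactorial]
  · intro r s (hsr : s < r)
    simp only [Matrix.of_apply, invFactorial]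
    rw [if_neg (by omega)]

theorem sum_mul_aitkenDet (μ : Fin k → ℤ) :
    ((∑ r, μ r : ℤ) : ℚ) * aitkenDet μ = ∑ j, aitkenDet (update μ j (μ j - 1)) := by
  simp only [aitkenDet, Matrix.det_apply', Matrix.of_apply, mul_sum]
  rw [sum_comm]
  refine sum_congr rfl fun σ _ => ?_
  set e : Fin k → ℤ := fun i => μ (σ i) + i - σ i
  have hrow (i₀ i : Fin k) :
      update μ (σ i₀) (μ (σ i₀) - 1) (σ i) + i - σ i = update e i₀ (e i₀ - 1) i := by
    rcases eq_or_ne i i₀ with rfl | h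
    · simp [e]
      ring
    · simp [e, h, σ.injective.ne h]
  have hsum : ∑ i, e i = ∑ r, μ r := by
    simp only [e, sum_sub_distrib, sum_add_distrib, Equiv.sum_comp σ μ,
      Equiv.sum_comp σ (fun r : Fin k => (r : ℤ))]
    ring
  have key : ∑ j, ∏ i, invFactorial (update μ j (μ j - 1) (σ i) + i - σ i) =
      ((∑ r, μ r : ℤ) : ℚ) * ∏ i, invFactorial (e i) := by
    rw [← Equiv.sum_comp σ
      (fun j => ∏ i, invFactorial (update μ j (μ j - 1) (σ i) + i - σ i))]
    simp only [hrow, prod_invFactorial_update_sub_one, ← sum_mul, ← hsum]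
    push_cast
    rfl
  rw [← mul_sum, key]
  ring

lemma dite_pow_div_factorial (x : ℚ) (m : ℤ) :
    (if _ : 0 ≤ m then x ^ m.toNat / (m.toNat.factorial : ℚ) else 0) =
      x ^ m.toNat * invFactorial m := by
  unfold invFactorial
  split_ifs <;> simp [div_eq_mul_inv]

theorem det_pow_div_factorial (μ : Fin k → ℕ) (x : ℚ) :
    (Matrix.of fun r s : Fin k =>
      if _ : (0 : ℤ) ≤ μ r + s - r then
        x ^ ((μ r : ℤ) + s - r).toNat / ((((μ r : ℤ) + s - r).toNat).factorial : ℚ)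
      else 0).det
    = aitkenDet (fun r => (μ r : ℤ)) * x ^ (∑ r, μ r) := by
  simp only [dite_pow_div_factorial, aitkenDet, Matrix.det_apply', Matrix.of_apply, sum_mul]
  refine sum_congr rfl fun σ _ => ?_
  rw [prod_mul_distrib, prod_pow_eq_pow_sum, mul_left_comm, mul_comm (x ^ _)]
  by_cases hσ : ∀ i, (0 : ℤ) ≤ μ (σ i) + i - σ i
  · congr 2
    zify
    rw [sum_congr rfl fun i _ => Int.toNat_of_nonneg (hσ i)]
    simp only [sum_sub_distrib, sum_add_distrib, Equiv.sum_comp σ (fun r => (μ r : ℤ)),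
      Equiv.sum_comp σ (fun r : Fin k => (r : ℤ))]
    ring
  · push Not at hσ
    obtain ⟨i, hi⟩ := hσ
    rw [prod_eq_zero (mem_univ i) (by rw [invFactorial, if_neg (not_le.2 hi)])]
    simp

def Cell (lam : Fin k → ℕ) : Type := {p : Fin k × ℕ // p.2 < lam p.1}

def cellEquivSigma (lam : Fin k → ℕ) : Cell lam ≃ Σ i, Fin (lam i) where
  toFun p := ⟨p.1.1, p.1.2, p.2⟩
  invFun q := ⟨(q.1, q.2), q.2.2⟩
  left_inv _ := rfl
  right_inv _ := rfl

instance (lam : Fin k → ℕ) : Finite (Cell lam) := .of_equiv _ (cellEquivSigma lam).symm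

structure IsSYT {N : ℕ} (lam : Fin k → ℕ) (g : Cell lam → Fin N) : Prop where
  bijective : Bijective g
  row_lt : ∀ p q : Cell lam, p.1.1 = q.1.1 → p.1.2 < q.1.2 → g p < g q
  col_lt : ∀ p q : Cell lam, p.1.2 = q.1.2 → p.1.1 < q.1.1 → g p < g q

abbrev SYT (lam : Fin k → ℕ) (N : ℕ) : Type := {g : Cell lam → Fin N // IsSYT lam g}

def IsCorner (lam : Fin k → ℕ) (i : Fin k) : Prop :=
  0 < lam i ∧ ∀ h : i.1 + 1 < k, lam ⟨i + 1, h⟩ < lam i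

def removeCorner (lam : Fin k → ℕ) (i : Fin k) : Fin k → ℕ := update lam i (lam i - 1)

variable {lam : Fin k → ℕ} {i : Fin k}

lemma IsCorner.lt_of_lt (hlam : Antitone lam) (hi : IsCorner lam i) {j : Fin k} (hij : i < j) :
    lam j < lam i :=
  have hk : i.1 + 1 < k := by omega
  (hlam (show (⟨i + 1, hk⟩ : Fin k) ≤ j from hij)).trans_lt (hi.2 hk)

lemma IsCorner.antitone_removeCorner (hlam : Antitone lam) (hi : IsCorner lam i) :
    Antitone (removeCorner lam i) := by
  intro r s hrs
  have := hlam hrs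
  simp only [removeCorner, update_apply]
  split_ifs with hs hr hr
  · omega
  · subst hs
    omega
  · subst hr
    have := hi.lt_of_lt hlam (lt_of_le_of_ne hrs (Ne.symm hs))
    omega
  · omega

lemma sum_removeCorner (hi : 0 < lam i) : ∑ r, removeCorner lam i r + 1 = ∑ r, lam r := by
  rw [removeCorner, sum_update_of_mem (mem_univ i), ← add_sum_erase univ lam (mem_univ i),
    sdiff_singleton_eq_erase]
  omega

lemma lt_removeCorner_iff {p : Fin k × ℕ} :
    p.2 < removeCorner lam i p.1 ↔ p.2 < lam p.1 ∧ p ≠ (i, lam i - 1) := by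
  obtain ⟨r, c⟩ := p
  rcases eq_or_ne r i with rfl | h
  · simp only [removeCorner, update_self, ne_eq, Prod.mk.injEq, true_and]
    omega
  · simp [removeCorner, h]

lemma removeCorner_le (r : Fin k) : removeCorner lam i r ≤ lam r := by
  unfold removeCorner
  rcases eq_or_ne r i with rfl | h <;> simp [*]

def Cell.ofRemoveCorner (p : Cell (removeCorner lam i)) : Cell lam :=
  ⟨p.1, p.2.trans_le (removeCorner_le _)⟩

lemma eq_corner_or_exists_ofRemoveCorner (p : Cell lam) :
    p.1 = (i, lam i - 1) ∨ ∃ p' : Cell (removeCorner lam i), p'.ofRemoveCorner = p := by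
  by_cases h : p.1 = (i, lam i - 1)
  · exact .inl h
  · exact .inr ⟨⟨p.1, lt_removeCorner_iff.2 ⟨p.2, h⟩⟩, rfl⟩

section Bijection

variable {n : ℕ}

noncomputable def topCell (g : SYT lam (n + 1)) : Cell lam :=
  (Equiv.ofBijective _ g.2.bijective).symm (Fin.last n)

lemma apply_topCell (g : SYT lam (n + 1)) : g.1 (topCell g) = Fin.last n :=
  (Equiv.ofBijective _ g.2.bijective).apply_symm_apply _

lemma apply_ne_last {g : SYT lam (n + 1)} {p : Cell lam} (hp : p ≠ topCell g) :
    g.1 p ≠ Fin.last n :=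
  fun h => hp (g.2.bijective.1 (h.trans (apply_topCell g).symm))

lemma not_lt_apply_topCell (g : SYT lam (n + 1)) (p : Cell lam) : ¬ g.1 (topCell g) < g.1 p := by
  rw [apply_topCell]
  exact not_lt.2 (Fin.le_last _)

lemma topCell_val (g : SYT lam (n + 1)) :
    (topCell g).1 = ((topCell g).1.1, lam (topCell g).1.1 - 1) := by
  set c := topCell g
  refine Prod.ext rfl ?_
  by_contra hne
  have hlt : c.1.2 + 1 < lam c.1.1 := by have := c.2; simp only at hne; omega
  exact not_lt_apply_topCell g _
    (g.2.row_lt c ⟨(c.1.1, c.1.2 + 1), hlt⟩ rfl (Nat.lt_succ_self _))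

lemma isCorner_topCell (g : SYT lam (n + 1)) : IsCorner lam (topCell g).1.1 := by
  set c := topCell g
  refine ⟨Nat.zero_lt_of_lt c.2, fun h => ?_⟩
  by_contra hle
  have hlt : c.1.2 < lam ⟨c.1.1 + 1, h⟩ := c.2.trans_le (not_lt.1 hle)
  exact not_lt_apply_topCell g _
    (g.2.col_lt c ⟨(⟨c.1.1 + 1, h⟩, c.1.2), hlt⟩ rfl (Fin.lt_def.2 (Nat.lt_succ_self _)))

lemma ofRemoveCorner_ne_topCell (g : SYT lam (n + 1))
    (p : Cell (removeCorner lam (topCell g).1.1)) : p.ofRemoveCorner ≠ topCell g := fun h =>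
  (lt_removeCorner_iff.1 p.2).2 ((congrArg Subtype.val h).trans (topCell_val g))

noncomputable def restrictTop (g : SYT lam (n + 1)) :
    SYT (removeCorner lam (topCell g).1.1) n where
  val p := (g.1 p.ofRemoveCorner).castPred (apply_ne_last (ofRemoveCorner_ne_topCell g p))
  property := by
    refine ⟨⟨fun p q h => ?_, fun v => ?_⟩,
      fun _ _ h₁ h₂ => ?_, fun _ _ h₁ h₂ => ?_⟩
    · have h' : (p.ofRemoveCorner).1 = (q.ofRemoveCorner).1 :=
        congrArg Subtype.val (g.2.bijective.1 (Fin.castPred_inj.1 h))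
      exact Subtype.ext h'
    · obtain ⟨p, hp⟩ := g.2.bijective.2 v.castSucc
      rcases eq_corner_or_exists_ofRemoveCorner (i := (topCell g).1.1) p with hc | ⟨p, rfl⟩
      · rw [show p = topCell g from Subtype.ext (hc.trans (topCell_val g).symm),
          apply_topCell] at hp
        exact absurd hp.symm (Fin.castSucc_ne_last v)
      · exact ⟨p, Fin.castSucc_injective _ ((Fin.castSucc_castPred _ _).trans hp)⟩
    · exact Fin.castPred_lt_castPred_iff.2 (g.2.row_lt _ _ h₁ h₂)
    · exact Fin.castPred_lt_castPred_iff.2 (g.2.col_lt _ _ h₁ h₂)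

lemma castSucc_restrictTop (g : SYT lam (n + 1)) (p : Cell (removeCorner lam (topCell g).1.1)) :
    ((restrictTop g).1 p).castSucc = g.1 p.ofRemoveCorner :=
  Fin.castSucc_castPred _ (apply_ne_last (ofRemoveCorner_ne_topCell g p))

def extendAt (i : Fin k) (g : Cell (removeCorner lam i) → Fin n) (p : Cell lam) : Fin (n + 1) :=
  if h : p.1 = (i, lam i - 1) then Fin.last n
  else (g ⟨p.1, lt_removeCorner_iff.2 ⟨p.2, h⟩⟩).castSucc

lemma extendAt_ofRemoveCorner (g : Cell (removeCorner lam i) → Fin n)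
    (p : Cell (removeCorner lam i)) : extendAt i g p.ofRemoveCorner = (g p).castSucc :=
  dif_neg (lt_removeCorner_iff.1 p.2).2

lemma extendAt_eq_last_iff (g : Cell (removeCorner lam i) → Fin n) (p : Cell lam) :
    extendAt i g p = Fin.last n ↔ p.1 = (i, lam i - 1) := by
  unfold extendAt
  split_ifs with h
  · simp [h]
  · simp [h, Fin.castSucc_ne_last]

lemma extendAt_lt_of_eq_corner (g : Cell (removeCorner lam i) → Fin n) {p q : Cell lam}
    (hp : p.1 ≠ (i, lam i - 1)) (hq : q.1 = (i, lam i - 1)) :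
    extendAt i g p < extendAt i g q := by
  rw [(extendAt_eq_last_iff g q).2 hq, Fin.lt_last_iff_ne_last]
  exact mt (extendAt_eq_last_iff g p).1 hp

lemma bijective_extendAt (hi : 0 < lam i) {g : Cell (removeCorner lam i) → Fin n}
    (hg : Bijective g) : Bijective (extendAt i g) := by
  have hlast {p : Cell lam} (hp : p.1 = (i, lam i - 1)) := (extendAt_eq_last_iff g p).2 hp
  refine ⟨fun p q h => ?_, fun v => ?_⟩
  · rcases eq_corner_or_exists_ofRemoveCorner (i := i) p with hp | ⟨p, rfl⟩ <;>
      rcases eq_corner_or_exists_ofRemoveCorner (i := i) q with hq | ⟨q, rfl⟩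
    · exact Subtype.ext (hp.trans hq.symm)
    · rw [hlast hp, extendAt_ofRemoveCorner] at h
      exact absurd h.symm (Fin.castSucc_ne_last _)
    · rw [hlast hq, extendAt_ofRemoveCorner] at h
      exact absurd h (Fin.castSucc_ne_last _)
    · rw [extendAt_ofRemoveCorner, extendAt_ofRemoveCorner] at h
      rw [hg.1 (Fin.castSucc_injective _ h)]
  · rcases Fin.eq_castSucc_or_eq_last v with ⟨w, rfl⟩ | rfl
    · obtain ⟨p, rfl⟩ := hg.2 w
      exact ⟨p.ofRemoveCorner, extendAt_ofRemoveCorner _ _⟩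
    · exact ⟨⟨(i, lam i - 1), Nat.sub_lt hi one_pos⟩, hlast rfl⟩

lemma isSYT_extendAt (hlam : Antitone lam) (hi : IsCorner lam i)
    (g : SYT (removeCorner lam i) n) : IsSYT lam (extendAt i g.1) := by
  refine ⟨bijective_extendAt hi.1 g.2.bijective,
    fun p q h₁ h₂ => ?_, fun p q h₁ h₂ => ?_⟩
  · rcases eq_corner_or_exists_ofRemoveCorner (i := i) q with hq | ⟨q, rfl⟩
    · refine extendAt_lt_of_eq_corner g.1 (fun hp => ?_) hq
      rw [hp, hq] at h₂
      exact lt_irrefl _ h₂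
    rcases eq_corner_or_exists_ofRemoveCorner (i := i) p with hp | ⟨p, rfl⟩
    · obtain ⟨hp₁, hp₂⟩ := Prod.ext_iff.1 hp
      simp only at hp₁ hp₂
      have hq := q.ofRemoveCorner.2
      rw [← h₁, hp₁] at hq
      omega
    · simpa only [extendAt_ofRemoveCorner, Fin.castSucc_lt_castSucc_iff]
        using g.2.row_lt p q h₁ h₂
  · rcases eq_corner_or_exists_ofRemoveCorner (i := i) q with hq | ⟨q, rfl⟩
    · refine extendAt_lt_of_eq_corner g.1 (fun hp => ?_) hq
      rw [hp, hq] at h₂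
      exact lt_irrefl _ h₂
    rcases eq_corner_or_exists_ofRemoveCorner (i := i) p with hp | ⟨p, rfl⟩
    · obtain ⟨hp₁, hp₂⟩ := Prod.ext_iff.1 hp
      have hq := q.ofRemoveCorner.2
      have hlt := hi.lt_of_lt hlam (hp₁ ▸ h₂)
      simp only at hp₁ hp₂ h₁ hq hlt
      omega
    · simpa only [extendAt_ofRemoveCorner, Fin.castSucc_lt_castSucc_iff]
        using g.2.col_lt p q h₁ h₂

lemma extendAt_restrictTop (g : SYT lam (n + 1)) :
    extendAt (topCell g).1.1 (restrictTop g).1 = g.1 := by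
  funext p
  rcases eq_corner_or_exists_ofRemoveCorner (i := (topCell g).1.1) p with hp | ⟨p, rfl⟩
  · rw [(extendAt_eq_last_iff _ p).2 hp, ← apply_topCell g]
    exact congrArg g.1 (Subtype.ext ((topCell_val g).trans hp.symm))
  · rw [extendAt_ofRemoveCorner, castSucc_restrictTop]

lemma eq_of_extendAt_eq {j : Fin k} (hi : 0 < lam i) {g : Cell (removeCorner lam i) → Fin n}
    {g' : Cell (removeCorner lam j) → Fin n} (h : extendAt i g = extendAt j g') : i = j := by
  have hlast : extendAt i g ⟨(i, lam i - 1), Nat.sub_lt hi one_pos⟩ = Fin.last n :=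
    (extendAt_eq_last_iff g _).2 rfl
  rw [h] at hlast
  exact (Prod.ext_iff.1 ((extendAt_eq_last_iff g' _).1 hlast)).1

lemma extendAt_injective : Injective (extendAt (n := n) (lam := lam) i) := fun g g' h =>
  funext fun p => Fin.castSucc_injective _ <| by
    rw [← extendAt_ofRemoveCorner, h, extendAt_ofRemoveCorner]

noncomputable def sytEquivSigma (hlam : Antitone lam) :
    SYT lam (n + 1) ≃ Σ i : {i // IsCorner lam i}, SYT (removeCorner lam i) n where
  toFun g := ⟨⟨_, isCorner_topCell g⟩, restrictTop g⟩
  invFun P := ⟨extendAt P.1.1 P.2.1, isSYT_extendAt hlam P.1.2 P.2⟩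
  left_inv g := Subtype.ext (extendAt_restrictTop g)
  right_inv := LeftInverse.rightInverse_of_injective
    (fun g => Subtype.ext (extendAt_restrictTop g)) <| by
    rintro ⟨⟨i, hi⟩, g⟩ ⟨⟨j, hj⟩, g'⟩ h
    have h' : extendAt i g.1 = extendAt j g'.1 := congrArg Subtype.val h
    obtain rfl := eq_of_extendAt_eq hi.1 h'
    obtain rfl := Subtype.ext (extendAt_injective h')
    rfl

end Bijection

lemma cast_removeCorner (hi : 0 < lam i) :
    (fun r => (removeCorner lam i r : ℤ)) = update (fun r => (lam r : ℤ)) i (lam i - 1) := by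
  funext r
  rcases eq_or_ne r i with rfl | h
  · simp only [removeCorner, update_self]
    omega
  · simp [removeCorner, h]

lemma aitkenDet_update_eq_zero_of_not_isCorner (hlam : Antitone lam) (hi : ¬ IsCorner lam i) :
    aitkenDet (update (fun r => (lam r : ℤ)) i (lam i - 1)) = 0 := by
  by_cases hflat : ∃ h : i.1 + 1 < k, lam ⟨i + 1, h⟩ = lam i
  · obtain ⟨h, hflat⟩ := hflat
    have hlt : i < ⟨i + 1, h⟩ := Fin.lt_def.2 (Nat.lt_succ_self _)
    refine aitkenDet_eq_zero_of_sub_eq _ hlt.ne ?_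
    rw [update_self, update_of_ne hlt.ne', hflat]
    push_cast
    ring
  · simp only [IsCorner, not_and, not_forall, not_lt] at hi
    push Not at hflat
    have hk : ¬ i.1 + 1 < k := fun h => by
      have hle := hlam (show i ≤ ⟨i + 1, h⟩ from Fin.le_def.2 (Nat.le_succ _))
      have hne := hflat h
      rcases Nat.eq_zero_or_pos (lam i) with h0 | hpos
      · omega
      · obtain ⟨_, hle'⟩ := hi hpos
        omega
    have h0 : lam i = 0 := by
      by_contra h0
      exact hk (hi (Nat.pos_of_ne_zero h0)).1
    refine aitkenDet_eq_zero_of_lt _ i ?_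
    rw [update_self]
    omega

theorem card_SYT_eq_factorial_mul_aitkenDet (hlam : Antitone lam) {N : ℕ}
    (hN : ∑ r, lam r = N) :
    (Nat.card (SYT lam N) : ℚ) = N.factorial * aitkenDet (fun r => (lam r : ℤ)) := by
  classical
  induction N generalizing lam with
  | zero =>
    obtain rfl : lam = 0 := funext fun r => sum_eq_zero_iff.1 hN r (mem_univ r)
    have : IsEmpty (Cell (0 : Fin k → ℕ)) := ⟨fun p => Nat.not_lt_zero _ p.2⟩
    have : Nonempty (SYT (0 : Fin k → ℕ) 0) :=
      ⟨isEmptyElim, ⟨isEmptyElim, fun v => v.elim0⟩, isEmptyElim, isEmptyElim⟩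
    rw [Nat.card_unique]
    simp [aitkenDet_zero]
  | succ n ih =>
    have hcorner (i : {i // IsCorner lam i}) :
        (Nat.card (SYT (removeCorner lam i) n) : ℚ) =
          n.factorial * aitkenDet (update (fun r => (lam r : ℤ)) i (lam i - 1)) := by
      rw [ih (i.2.antitone_removeCorner hlam), cast_removeCorner i.2.1]
      have := sum_removeCorner i.2.1
      omega
    rw [Nat.card_congr (sytEquivSigma hlam), Nat.card_sigma, Nat.cast_sum]
    simp only [hcorner]
    calc ∑ i : {i // IsCorner lam i}, (n.factorial : ℚ) *
          aitkenDet (update (fun r => (lam r : ℤ)) i (lam i - 1))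
        = n.factorial * ∑ i, aitkenDet (update (fun r => (lam r : ℤ)) i (lam i - 1)) := by
          have hzero : ∑ i : {i // ¬ IsCorner lam i},
              aitkenDet (update (fun r => (lam r : ℤ)) i (lam i - 1)) = 0 :=
            Fintype.sum_eq_zero _ fun i => aitkenDet_update_eq_zero_of_not_isCorner hlam i.2
          rw [← mul_sum, ← Fintype.sum_subtype_add_sum_subtype (IsCorner lam), hzero, add_zero]
      _ = (n + 1).factorial * aitkenDet (fun r => (lam r : ℤ)) := by
          rw [← sum_mul_aitkenDet, Nat.factorial_succ]
          push_cast [← Nat.cast_sum, hN]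
          ring

def rectCellEquiv (a : ℕ) : Fin k × Fin a ≃ Cell (fun _ : Fin k => a) where
  toFun p := ⟨(p.1, p.2), p.2.2⟩
  invFun p := (p.1.1, ⟨p.1.2, p.2⟩)
  left_inv _ := rfl
  right_inv _ := rfl

theorem rectSYTCard_eq_card_SYT (a k : ℕ) :
    rectSYTCard a k = Nat.card (SYT (fun _ : Fin k => a) (k * a)) := by
  refine Nat.card_congr <|
    Equiv.subtypeEquiv ((rectCellEquiv a).arrowCongr (Equiv.refl _)) fun f => ?_
  constructor
  · rintro ⟨hbij, hrow, hcol⟩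
    refine ⟨hbij.comp (rectCellEquiv a).symm.bijective, ?_, ?_⟩
    · rintro ⟨⟨i, j⟩, hj⟩ ⟨⟨i', j'⟩, hj'⟩ (rfl : i = i') (hjj : j < j')
      exact hrow i ⟨j, hj⟩ ⟨j', hj'⟩ hjj
    · rintro ⟨⟨i, j⟩, hj⟩ ⟨⟨i', j'⟩, hj'⟩ (rfl : j = j') (hii : i < i')
      exact hcol i i' ⟨j, hj⟩ hii
  · rintro ⟨hbij, hrow, hcol⟩
    exact ⟨(Bijective.of_comp_iff f (rectCellEquiv a).symm.bijective).1 hbij,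
      fun i j j' h => hrow (rectCellEquiv a (i, j)) (rectCellEquiv a (i, j')) rfl h,
      fun i i' j h => hcol (rectCellEquiv a (i, j)) (rectCellEquiv a (i', j)) rfl h⟩

end Aitken

/-- The determinant of the upper-right `k × k` block of the unipotent upper
triangular matrix with entries `x^{j-i}/(j-i)!` equals
`(C_{n-k+1,k}/((n-k+1)k)!) · x^{(n-k+1)k}`, where `C_{n-k+1,k}` counts standard
Young tableaux of rectangular shape `k × (n-k+1)`. -/
theorem det_exp_block (n k : ℕ) (hk : k ≤ n + 1) (x : ℚ) :
    (Matrix.of fun r s : Fin k =>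
        if h : (0 : ℤ) ≤ (n : ℤ) - k + 1 + s - r then
          x ^ ((n : ℤ) - k + 1 + s - r).toNat /
            ((((n : ℤ) - k + 1 + s - r).toNat).factorial : ℚ)
        else 0).det
    = ((rectSYTCard (n + 1 - k) k : ℚ) / (((n + 1 - k) * k).factorial : ℚ)) *
        x ^ ((n + 1 - k) * k) := by
  have ha : (n : ℤ) - k + 1 = ((n + 1 - k : ℕ) : ℤ) := by omega
  have hsum : ∑ _r : Fin k, (n + 1 - k) = k * (n + 1 - k) := by simp
  simp only [ha]
  rw [Aitken.det_pow_div_factorial (fun _ => n + 1 - k), Aitken.rectSYTCard_eq_card_SYT,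
    Aitken.card_SYT_eq_factorial_mul_aitkenDet (fun _ _ _ => le_rfl) hsum, hsum, mul_comm k,
    mul_div_cancel_left₀ _ (by positivity)]
end

section
/- Let V be a finite-dimensional complex vector space of dimension n and let 'F^• and ''F^• be two decreasing filtrations on V that are d-opposed, i.e., 'F^p ⊕ ''F^{d-p+1} = V for every integer p. Then V decomposes as V = ⊕_p ('F^p ∩ ''F^{d-p}), and dim('F^p ∩ ''F^{d-p}) = dim 'F^p − dim 'F^{p+1} for all p. -/
/-- Two `d`-opposed decreasing filtrations on a finite-dimensional complex vector
space give a direct sum decomposition `V = ⊕ₚ ('F^p ∩ ''F^{d-p})`, with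
`dim ('F^p ∩ ''F^{d-p}) = dim 'F^p - dim 'F^{p+1}`. -/
theorem opposed_filtrations_direct_sum
    (V : Type) [AddCommGroup V] [Module ℂ V] [FiniteDimensional ℂ V] (d : ℤ)
    (F' F'' : ℤ → Submodule ℂ V)
    (hF'dec : ∀ p, F' (p + 1) ≤ F' p) (hF''dec : ∀ p, F'' (p + 1) ≤ F'' p)
    (hF'low : ∃ a, ∀ p ≤ a, F' p = ⊤) (hF'high : ∃ b, ∀ p, b ≤ p → F' p = ⊥)
    (hF''low : ∃ a, ∀ p ≤ a, F'' p = ⊤) (hF''high : ∃ b, ∀ p, b ≤ p → F'' p = ⊥)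
    (hopp : ∀ p, IsCompl (F' p) (F'' (d - p + 1))) :
    DirectSum.IsInternal (fun p : ℤ => F' p ⊓ F'' (d - p)) ∧
    ∀ p : ℤ, Module.finrank ℂ (F' p ⊓ F'' (d - p) : Submodule ℂ V) =
      Module.finrank ℂ (F' p) - Module.finrank ℂ (F' (p + 1)) := by
  set A : ℤ → Submodule ℂ V := fun p => F' p ⊓ F'' (d - p) with hA
  have hF'anti : Antitone F' := antitone_int_of_succ_le hF'dec
  have hF''anti : Antitone F'' := antitone_int_of_succ_le hF''dec
  -- rewrite hopp (p+1) disjointness as Disjoint (F' (p+1)) (F'' (d - p))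
  have hdisj : ∀ p : ℤ, Disjoint (F' (p + 1)) (F'' (d - p)) := by
    intro p
    have := (hopp (p + 1)).disjoint
    have e : d - (p + 1) + 1 = d - p := by ring
    rwa [e] at this
  have hcodisj : ∀ p : ℤ, F' (p + 1) ⊔ F'' (d - p) = ⊤ := by
    intro p
    have := (hopp (p + 1)).sup_eq_top
    have e : d - (p + 1) + 1 = d - p := by ring
    rwa [e] at this
  -- key: F' p = F' (p+1) ⊔ A p
  have hsup : ∀ p : ℤ, F' (p + 1) ⊔ A p = F' p := by
    intro p
    apply le_antisymm
    · exact sup_le (hF'dec p) inf_le_left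
    · intro v hv
      have : v ∈ F' (p + 1) ⊔ F'' (d - p) := (hcodisj p).symm ▸ Submodule.mem_top
      obtain ⟨x, hx, y, hy, hxy⟩ := Submodule.mem_sup.mp this
      have hyF' : y ∈ F' p := by
        have : y = v - x := by rw [← hxy]; abel
        rw [this]
        exact Submodule.sub_mem _ hv (hF'dec p hx)
      exact Submodule.mem_sup.mpr ⟨x, hx, y, Submodule.mem_inf.mpr ⟨hyF', hy⟩, hxy⟩
  have hdisjA : ∀ p : ℤ, Disjoint (F' (p + 1)) (A p) := fun p =>
    (hdisj p).mono_right inf_le_right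
  -- finrank part
  have hfin : ∀ p : ℤ, Module.finrank ℂ (A p : Submodule ℂ V) =
      Module.finrank ℂ (F' p) - Module.finrank ℂ (F' (p + 1)) := by
    intro p
    have h := Submodule.finrank_sup_add_finrank_inf_eq (F' (p + 1)) (A p)
    rw [hsup p, (hdisjA p).eq_bot, finrank_bot, add_zero] at h
    omega
  -- independence
  have hindep : iSupIndep A := by
    intro p
    have hle : (⨆ (q : ℤ) (_ : q ≠ p), A q) ≤ F' (p + 1) ⊔ F'' (d - p + 1) := by
      refine iSup₂_le fun q hq => ?_
      rcases lt_or_gt_of_ne hq with h | h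
      · -- q < p : A q ≤ F'' (d - q) ≤ F'' (d - p + 1)
        exact le_trans inf_le_right (le_trans (hF''anti (by omega)) le_sup_right)
      · -- q > p : A q ≤ F' q ≤ F' (p + 1)
        exact le_trans inf_le_left (le_trans (hF'anti (by omega)) le_sup_left)
    refine Disjoint.mono_right hle ?_
    rw [disjoint_iff]
    apply le_bot_iff.mp
    intro x hx
    obtain ⟨hxA, hxS⟩ := Submodule.mem_inf.mp hx
    obtain ⟨hxF', hxF''⟩ := Submodule.mem_inf.mp hxA
    obtain ⟨y, hy, z, hz, hyz⟩ := Submodule.mem_sup.mp hxS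
    have hzF' : z ∈ F' p := by
      have : z = x - y := by rw [← hyz]; abel
      rw [this]
      exact Submodule.sub_mem _ hxF' (hF'dec p hy)
    have hz0 : z = 0 := by
      have := (hopp p).disjoint.le_bot (Submodule.mem_inf.mpr ⟨hzF', hz⟩)
      simpa using this
    have hxy : x = y := by rw [← hyz, hz0, add_zero]
    have : x ∈ F' (p + 1) ⊓ F'' (d - p) := Submodule.mem_inf.mpr ⟨hxy ▸ hy, hxF''⟩
    simpa using (hdisj p).le_bot this
  -- iSup A = ⊤
  obtain ⟨a, ha⟩ := hF'low
  obtain ⟨b, hb⟩ := hF'high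
  have hstep : ∀ p : ℤ, F' p ≤ ⨆ q, A q := by
    have key : ∀ n : ℕ, F' (b - n) ≤ ⨆ q, A q := by
      intro n
      induction n with
      | zero => simp [hb b le_rfl]
      | succ n ih =>
        have e : (b - (n + 1 : ℕ)) + 1 = b - n := by push_cast; ring
        calc F' (b - (n + 1 : ℕ)) = F' ((b - (n + 1 : ℕ)) + 1) ⊔ A (b - (n + 1 : ℕ)) :=
              (hsup _).symm
          _ ≤ (⨆ q, A q) ⊔ (⨆ q, A q) := by
              rw [e]; exact sup_le_sup ih (le_iSup A _)
          _ = ⨆ q, A q := sup_idem _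
    intro p
    rcases le_or_gt b p with h | h
    · rw [hb p h]; exact bot_le
    · have : F' (b - ((b - p).toNat : ℤ)) ≤ ⨆ q, A q := key (b - p).toNat
      rwa [show (b - ((b - p).toNat : ℤ)) = p by omega] at this
  have htop : (⨆ q, A q) = ⊤ := by
    refine top_le_iff.mp ?_
    rw [← ha (min a b) (min_le_left _ _)]
    exact hstep _
  exact ⟨(DirectSum.isInternal_submodule_iff_iSupIndep_and_iSup_eq_top A).mpr
    ⟨hindep, htop⟩, hfin⟩
end

section
/- Let H be a finite-dimensional vector space over a field and N a nilpotent endomorphism of H. For every integer d there exists at most one increasing filtration W = W(N,d) of H such that N(W_i) ⊆ W_{i-2} for all i and such that N^l : Gr^W_{d+l}H → Gr^W_{d-l}H is an isomorphism for all l ≥ 0 (uniqueness of the monodromy weight filtration centered at d). -/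
def IsMonodromyWeightFiltration {K H : Type} [Field K] [AddCommGroup H] [Module K H]
    (N : H →ₗ[K] H) (d : ℤ) (W : ℤ → Submodule K H) : Prop :=
  (∀ i : ℤ, W i ≤ W (i + 1)) ∧
  (∃ a : ℤ, ∀ i ≤ a, W i = ⊥) ∧
  (∃ b : ℤ, ∀ i : ℤ, b ≤ i → W i = ⊤) ∧
  (∀ i : ℤ, Submodule.map N (W i) ≤ W (i - 2)) ∧
  (∀ l : ℕ,
    (∀ x ∈ W (d + l), (N ^ l) x ∈ W (d - l - 1) → x ∈ W (d + l - 1)) ∧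
    (W (d - l) ≤ Submodule.map (N ^ l : H →ₗ[K] H) (W (d + l)) ⊔ W (d - l - 1)))

section Aux

variable {K H : Type} [Field K] [AddCommGroup H] [Module K H]
  {N : H →ₗ[K] H} {d : ℤ} {W : ℤ → Submodule K H}

lemma mwf_mono (hW : IsMonodromyWeightFiltration N d W) :
    ∀ i j : ℤ, i ≤ j → W i ≤ W j := by
  have key : ∀ (i : ℤ) (n : ℕ), W i ≤ W (i + n) := by
    intro i n
    induction n with
    | zero => norm_num
    | succ n ih =>
      refine le_trans ih (le_trans (hW.1 (i + n)) ?_)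
      have : i + (n : ℤ) + 1 = i + ((n : ℕ) + 1 : ℕ) := by push_cast; ring
      rw [this]
  intro i j hij
  have : j = i + ((j - i).toNat : ℤ) := by rw [Int.toNat_of_nonneg (by omega)]; ring
  rw [this]
  exact key i _

lemma mwf_pow_map (hW : IsMonodromyWeightFiltration N d W) :
    ∀ (k : ℕ) (i : ℤ), Submodule.map (N ^ k : H →ₗ[K] H) (W i) ≤ W (i - 2 * k) := by
  intro k
  induction k with
  | zero =>
    intro i
    rw [show ((N : H →ₗ[K] H) ^ 0) = LinearMap.id from rfl, Submodule.map_id]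
    norm_num
  | succ k ih =>
    intro i
    have h1 : (N ^ (k + 1) : H →ₗ[K] H) = (N ^ k : H →ₗ[K] H) ∘ₗ N := by
      rw [pow_succ]; rfl
    rw [h1, Submodule.map_comp]
    refine le_trans (Submodule.map_mono (hW.2.2.2.1 i)) ?_
    refine le_trans (ih (i - 2)) ?_
    have : i - 2 - 2 * (k : ℤ) = i - 2 * ((k : ℕ) + 1 : ℕ) := by push_cast; ring
    rw [this]

lemma mwf_inj_char (hW : IsMonodromyWeightFiltration N d W) (l : ℕ) :
    W (d + l - 1) = W (d + l) ⊓ Submodule.comap (N ^ l : H →ₗ[K] H) (W (d - l - 1)) := by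
  apply le_antisymm
  · refine le_inf (mwf_mono hW _ _ (by omega)) ?_
    intro x hx
    simp only [Submodule.mem_comap]
    have := mwf_pow_map hW l (d + l - 1) (Submodule.mem_map_of_mem hx)
    refine mwf_mono hW _ _ (by omega) this
  · intro x hx
    exact (hW.2.2.2.2 l).1 x hx.1 hx.2

lemma mwf_surj_char (hW : IsMonodromyWeightFiltration N d W) (l : ℕ) :
    W (d - l) = Submodule.map (N ^ l : H →ₗ[K] H) (W (d + l)) ⊔ W (d - l - 1) := by
  apply le_antisymm
  · exact (hW.2.2.2.2 l).2
  · refine sup_le ?_ (mwf_mono hW _ _ (by omega))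
    refine le_trans (mwf_pow_map hW l (d + l)) ?_
    have : d + l - 2 * (l : ℤ) = d - l := by ring
    rw [this]

end Aux

/-- Uniqueness of the monodromy weight filtration centered at `d`. -/
theorem monodromy_weight_filtration_unique
    (K : Type) [Field K] (H : Type) [AddCommGroup H] [Module K H]
    [FiniteDimensional K H]
    (N : H →ₗ[K] H) (hN : IsNilpotent N) (d : ℤ)
    (W W' : ℤ → Submodule K H)
    (hW : IsMonodromyWeightFiltration N d W)
    (hW' : IsMonodromyWeightFiltration N d W') :
    W = W' := by
  obtain ⟨a, ha⟩ := hW.2.1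
  obtain ⟨b, hb⟩ := hW.2.2.1
  obtain ⟨a', ha'⟩ := hW'.2.1
  obtain ⟨b', hb'⟩ := hW'.2.2.1
  set P : ℕ → Prop := fun l => W (d + l) = W' (d + l) ∧ W (d - l - 1) = W' (d - l - 1) with hP
  set L : ℕ := (max (max (b - d) (b' - d)) (max (d - a) (d - a'))).toNat + 1 with hL
  have base : ∀ l : ℕ, L ≤ l → P l := by
    intro l hl
    have hcast : ((max (max (b - d) (b' - d)) (max (d - a) (d - a'))).toNat : ℤ) + 1 ≤ (l : ℤ) := by
      exact_mod_cast hl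
    have h1 : b - d ≤ ((max (max (b - d) (b' - d)) (max (d - a) (d - a'))).toNat : ℤ) :=
      le_trans (le_trans (le_max_left _ _) (le_max_left _ _)) (Int.self_le_toNat _)
    have h2 : b' - d ≤ ((max (max (b - d) (b' - d)) (max (d - a) (d - a'))).toNat : ℤ) :=
      le_trans (le_trans (le_max_right _ _) (le_max_left _ _)) (Int.self_le_toNat _)
    have h3 : d - a ≤ ((max (max (b - d) (b' - d)) (max (d - a) (d - a'))).toNat : ℤ) :=
      le_trans (le_trans (le_max_left _ _) (le_max_right _ _)) (Int.self_le_toNat _)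
    have h4 : d - a' ≤ ((max (max (b - d) (b' - d)) (max (d - a) (d - a'))).toNat : ℤ) :=
      le_trans (le_trans (le_max_right _ _) (le_max_right _ _)) (Int.self_le_toNat _)
    constructor
    · rw [hb _ (by omega), hb' _ (by omega)]
    · rw [ha _ (by omega), ha' _ (by omega)]
  have step : ∀ l : ℕ, P (l + 1) → P l := by
    intro l ⟨h1, h2⟩
    have c1 : ((l + 1 : ℕ) : ℤ) = (l : ℤ) + 1 := by push_cast; ring
    rw [c1] at h1 h2
    constructor
    · have e1 := mwf_inj_char hW (l + 1)
      have e2 := mwf_inj_char hW' (l + 1)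
      rw [c1] at e1 e2
      have : d + ((l : ℤ) + 1) - 1 = d + l := by ring
      rw [this] at e1 e2
      rw [e1, e2, h1, h2]
    · have e1 := mwf_surj_char hW (l + 1)
      have e2 := mwf_surj_char hW' (l + 1)
      rw [c1] at e1 e2
      have : d - ((l : ℤ) + 1) = d - l - 1 := by ring
      rw [this] at e1 e2 h2
      rw [e1, e2, h1, h2]
  have key : ∀ m : ℕ, P (L - m) := by
    intro m
    induction m with
    | zero => exact base L (by omega)
    | succ m ih =>
      rcases le_or_gt L m with h | h
      · have : L - (m + 1) = L - m := by omega
        rw [this]; exact ih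
      · have : L - m = (L - (m + 1)) + 1 := by omega
        rw [this] at ih
        exact step _ ih
  have all : ∀ l : ℕ, P l := by
    intro l
    rcases le_or_gt L l with h | h
    · exact base l h
    · have : l = L - (L - l) := by omega
      rw [this]; exact key _
  funext i
  rcases le_or_gt d i with h | h
  · have : i = d + ((i - d).toNat : ℤ) := by
      rw [Int.toNat_of_nonneg (by omega)]; ring
    rw [this]; exact (all _).1
  · have : i = d - ((d - 1 - i).toNat : ℤ) - 1 := by
      rw [Int.toNat_of_nonneg (by omega)]; ring
    rw [this]; exact (all _).2
end

section
/- Let H be a finite-dimensional complex vector space, d an integer, N a nilpotent endomorphism of H with monodromy weight filtration W = W(N,d), and S a nondegenerate bilinear form on H with S(v,u) = (−1)^d S(u,v) and S(Nu,v) + S(u,Nv) = 0. Then S(W_a, W_b) = 0 whenever a + b ≤ 2d − 1, and consequently for each l ≥ 0 the pairing S(·, N^l ·) descends to a nondegenerate pairing on Gr^W_{d+l}H. -/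
open Module

section Aux

variable {H : Type} [AddCommGroup H] [Module ℂ H]

theorem wfp_mono (W : ℤ → Submodule ℂ H) (h1 : ∀ i : ℤ, W i ≤ W (i + 1)) :
    ∀ i j : ℤ, i ≤ j → W i ≤ W j := by
  have step : ∀ (i : ℤ) (n : ℕ), W i ≤ W (i + n) := by
    intro i n
    induction n with
    | zero => simp
    | succ n ih =>
      refine ih.trans ?_
      have e : W (i + ((n : ℕ) + 1 : ℕ)) = W ((i + n) + 1) := congrArg W (by push_cast; ring)
      rw [e]
      exact h1 (i + n)
  intro i j hij
  have e : W j = W (i + (j - i).toNat) := congrArg W (by omega)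
  rw [e]
  exact step i _

theorem wfp_mapPow (W : ℤ → Submodule ℂ H) (N : H →ₗ[ℂ] H)
    (h4 : ∀ i : ℤ, Submodule.map N (W i) ≤ W (i - 2)) :
    ∀ (k : ℕ) (i : ℤ), ∀ x ∈ W i, (N ^ k) x ∈ W (i - 2 * k) := by
  intro k
  induction k with
  | zero => intro i x hx; simpa using hx
  | succ k ih =>
    intro i x hx
    have h1 : (N ^ k) x ∈ W (i - 2 * k) := ih i x hx
    have h2 : N ((N ^ k) x) ∈ W (i - 2 * k - 2) := h4 _ ⟨_, h1, rfl⟩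
    have e : W (i - 2 * ((k : ℕ) + 1 : ℕ)) = W (i - 2 * k - 2) := congrArg W (by push_cast; ring)
    have e2 : (N ^ (k + 1)) x = N ((N ^ k) x) := by rw [pow_succ']; rfl
    rw [e2, e]
    exact h2

theorem wfp_skewPow (N : H →ₗ[ℂ] H) (S : H →ₗ[ℂ] H →ₗ[ℂ] ℂ)
    (hskew : ∀ u v : H, S (N u) v + S u (N v) = 0) :
    ∀ (k : ℕ) (u v : H), S ((N ^ k) u) v = (-1 : ℂ) ^ k * S u ((N ^ k) v) := by
  intro k
  induction k with
  | zero => intro u v; simp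
  | succ k ih =>
    intro u v
    have e1 : (N ^ (k + 1)) u = (N ^ k) (N u) := by rw [pow_succ]; rfl
    have e2 : (N ^ (k + 1)) v = N ((N ^ k) v) := by rw [pow_succ']; rfl
    have h := eq_neg_of_add_eq_zero_left (hskew u ((N ^ k) v))
    rw [e1, ih (N u) v, e2, h, pow_succ]
    ring

end Aux

/-- For a `(-1)^d`-symmetric nondegenerate form `S` with `N` an infinitesimal
isometry, the monodromy weight filtration satisfies `S(W_a, W_b) = 0` for
`a + b ≤ 2d - 1`, and `S(·, N^l ·)` descends to a nondegenerate pairing on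
`Gr^W_{d+l}` (elementwise: its radical on `W_{d+l}` is exactly `W_{d+l-1}`). -/
theorem weight_filtration_pairing
    (H : Type) [AddCommGroup H] [Module ℂ H] [FiniteDimensional ℂ H]
    (d : ℤ) (N : H →ₗ[ℂ] H) (hNnil : IsNilpotent N)
    (W : ℤ → Submodule ℂ H) (hW : IsMonodromyWeightFiltration N d W)
    (S : H →ₗ[ℂ] H →ₗ[ℂ] ℂ)
    (hnd : ∀ u : H, (∀ v : H, S u v = 0) → u = 0)
    (hsymm : ∀ u v : H, S v u = (-1 : ℂ) ^ d * S u v)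
    (hskew : ∀ u v : H, S (N u) v + S u (N v) = 0) :
    (∀ a b : ℤ, a + b ≤ 2 * d - 1 → ∀ u ∈ W a, ∀ v ∈ W b, S u v = 0) ∧
    (∀ l : ℕ, ∀ u ∈ W (d + l),
      (∀ v ∈ W (d + l), S u ((N ^ l) v) = 0) → u ∈ W (d + l - 1)) := by
  obtain ⟨h1, ⟨a, ha⟩, ⟨b, hb⟩, h4, h5⟩ := hW
  have mono := wfp_mono W h1
  have mapPow := wfp_mapPow W N h4
  have skewPow := wfp_skewPow N S hskew
  have hneg : ((-1 : ℂ) ^ d) ≠ 0 := zpow_ne_zero d (by norm_num)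
  -- key orthogonality : S(W_{d-l-1}, W_{d+l}) = 0
  have key : ∀ l : ℕ, ∀ u ∈ W (d - l - 1), ∀ v ∈ W (d + l), S u v = 0 := by
    have aux : ∀ k l : ℕ, (d - a).toNat ≤ l + k →
        ∀ u ∈ W (d - l - 1), ∀ v ∈ W (d + l), S u v = 0 := by
      intro k
      induction k with
      | zero =>
        intro l hl u hu v _
        have hbot : W (d - l - 1) = ⊥ := ha _ (by omega)
        rw [hbot, Submodule.mem_bot] at hu
        simp [hu]
      | succ k ih =>
        intro l hl u hu v hv
        have hcast : W (d - ((l : ℕ) + 1 : ℕ)) = W (d - l - 1) := congrArg W (by push_cast; ring)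
        have hu2 : u ∈ W (d - ((l : ℕ) + 1 : ℕ)) := by rw [hcast]; exact hu
        have hsup := (h5 (l + 1)).2 hu2
        rw [Submodule.mem_sup] at hsup
        obtain ⟨y, hy, z, hz, huyz⟩ := hsup
        obtain ⟨x, hx, rfl⟩ := hy
        have hNv : (N ^ (l + 1)) v ∈ W (d - ((l : ℕ) + 1 : ℕ) - 1) := by
          have hmem := mapPow (l + 1) (d + l) v hv
          have e : W (d + l - 2 * ((l : ℕ) + 1 : ℕ)) = W (d - ((l : ℕ) + 1 : ℕ) - 1) :=
            congrArg W (by push_cast; ring)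
          rw [e] at hmem; exact hmem
        have hxv : S ((N ^ (l + 1)) x) v = 0 := by
          rw [skewPow]
          have h0 : S ((N ^ (l + 1)) v) x = 0 := ih (l + 1) (by omega) _ hNv x hx
          have hs := hsymm x ((N ^ (l + 1)) v)
          rw [h0] at hs
          rw [(mul_eq_zero.mp hs.symm).resolve_left hneg, mul_zero]
        have hzv : S z v = 0 := by
          have hv' : v ∈ W (d + ((l : ℕ) + 1 : ℕ)) := by
            have e : W (d + ((l : ℕ) + 1 : ℕ)) = W ((d + l) + 1) := congrArg W (by push_cast; ring)
            rw [e]; exact h1 (d + l) hv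
          exact ih (l + 1) (by omega) z hz v hv'
        rw [← huyz, map_add, LinearMap.add_apply, hxv, hzv, add_zero]
    intro l u hu v hv
    exact aux (d - a).toNat l (by omega) u hu v hv
  -- part 1
  have part1 : ∀ a' b' : ℤ, a' + b' ≤ 2 * d - 1 → ∀ u ∈ W a', ∀ v ∈ W b', S u v = 0 := by
    intro a' b' hab u hu v hv
    rcases le_or_gt a' (d - 1) with h | h
    · set l := (d - 1 - a').toNat with hldef
      have hl : (l : ℤ) = d - 1 - a' := Int.toNat_of_nonneg (by omega)
      have hu' : u ∈ W (d - l - 1) := by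
        rw [show d - (l : ℤ) - 1 = a' by omega]; exact hu
      have hv' : v ∈ W (d + l) := mono _ _ (by omega) hv
      exact key l u hu' v hv'
    · set l := (d - 1 - b').toNat with hldef
      have hl : (l : ℤ) = d - 1 - b' := Int.toNat_of_nonneg (by omega)
      have hv' : v ∈ W (d - l - 1) := by
        rw [show d - (l : ℤ) - 1 = b' by omega]; exact hv
      have hu' : u ∈ W (d + l) := mono _ _ (by omega) hu
      have h0 := key l v hv' u hu'
      have hs := hsymm u v
      rw [h0] at hs
      exact (mul_eq_zero.mp hs.symm).resolve_left hneg
  -- graded rank symmetry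
  have grEq : ∀ k : ℕ, finrank ℂ (W (d + k)) + finrank ℂ (W (d - k - 1)) =
      finrank ℂ (W (d + k - 1)) + finrank ℂ (W (d - k)) := by
    intro k
    set φ : (W (d + k)) →ₗ[ℂ] (H ⧸ W (d - k - 1)) :=
      (W (d - k - 1)).mkQ.comp ((N ^ k).domRestrict (W (d + k))) with hφ
    have hker : LinearMap.ker φ = Submodule.comap (W (d + k)).subtype (W (d + k - 1)) := by
      ext x
      simp only [LinearMap.mem_ker, hφ, LinearMap.comp_apply, LinearMap.domRestrict_apply,
        Submodule.mkQ_apply, Submodule.Quotient.mk_eq_zero, Submodule.mem_comap,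
        Submodule.subtype_apply]
      constructor
      · intro hx; exact (h5 k).1 x x.2 hx
      · intro hx
        have hmem := mapPow k (d + k - 1) x hx
        have e : W (d + k - 1 - 2 * k) = W (d - k - 1) := congrArg W (by push_cast; ring)
        rw [e] at hmem; exact hmem
    have hrange : LinearMap.range φ = Submodule.map (W (d - k - 1)).mkQ (W (d - k)) := by
      apply le_antisymm
      · rintro _ ⟨x, rfl⟩
        refine ⟨(N ^ k) x, ?_, rfl⟩
        have hmem := mapPow k (d + k) x x.2
        have e : W (d + k - 2 * k) = W (d - k) := congrArg W (by push_cast; ring)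
        rw [e] at hmem; exact hmem
      · rintro _ ⟨w, hw, rfl⟩
        have hsup := (h5 k).2 hw
        rw [Submodule.mem_sup] at hsup
        obtain ⟨y, hy, z, hz, hwyz⟩ := hsup
        obtain ⟨x, hx, rfl⟩ := hy
        refine ⟨⟨x, hx⟩, ?_⟩
        have hz0 : (W (d - k - 1)).mkQ z = 0 := by
          simpa [Submodule.Quotient.mk_eq_zero] using hz
        show (W (d - k - 1)).mkQ ((N ^ k) x) = (W (d - k - 1)).mkQ w
        rw [← hwyz, map_add, hz0, add_zero]
    have rn1 := LinearMap.finrank_range_add_finrank_ker φ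
    have hker_rank : finrank ℂ (LinearMap.ker φ) = finrank ℂ (W (d + k - 1)) := by
      rw [hker]
      exact LinearEquiv.finrank_eq (Submodule.comapSubtypeEquivOfLe (mono _ _ (by omega)))
    set ρ : (W (d - k)) →ₗ[ℂ] (H ⧸ W (d - k - 1)) :=
      (W (d - k - 1)).mkQ.comp (W (d - k)).subtype with hρ
    have hρrange : LinearMap.range ρ = Submodule.map (W (d - k - 1)).mkQ (W (d - k)) := by
      rw [hρ, LinearMap.range_comp, Submodule.range_subtype]
    have hρker : LinearMap.ker ρ = Submodule.comap (W (d - k)).subtype (W (d - k - 1)) := by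
      ext x
      simp [hρ, Submodule.Quotient.mk_eq_zero]
    have rn2 := LinearMap.finrank_range_add_finrank_ker ρ
    have hρker_rank : finrank ℂ (LinearMap.ker ρ) = finrank ℂ (W (d - k - 1)) := by
      rw [hρker]
      exact LinearEquiv.finrank_eq (Submodule.comapSubtypeEquivOfLe (mono _ _ (by omega)))
    rw [hrange, hker_rank] at rn1
    rw [hρrange, hρker_rank] at rn2
    omega
  -- complementary ranks
  have Fl : ∀ l : ℕ, finrank ℂ (W (d + l)) + finrank ℂ (W (d - l - 1)) = finrank ℂ H := by
    have aux : ∀ k l : ℕ, (b - d).toNat + (d - a).toNat ≤ l + k →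
        finrank ℂ (W (d + l)) + finrank ℂ (W (d - l - 1)) = finrank ℂ H := by
      intro k
      induction k with
      | zero =>
        intro l hl
        have htop : W (d + l) = ⊤ := hb _ (by omega)
        have hbot : W (d - l - 1) = ⊥ := ha _ (by omega)
        rw [htop, hbot, finrank_top, finrank_bot, add_zero]
      | succ k ih =>
        intro l hl
        have h' := ih (l + 1) (by omega)
        have hg := grEq (l + 1)
        have e1 : W (d + ((l : ℕ) + 1 : ℕ)) = W (d + l + 1) := congrArg W (by push_cast; ring)
        have e2 : W (d - ((l : ℕ) + 1 : ℕ) - 1) = W (d - l - 2) := congrArg W (by push_cast; ring)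
        have e3 : W (d + ((l : ℕ) + 1 : ℕ) - 1) = W (d + l) := congrArg W (by push_cast; ring)
        have e4 : W (d - ((l : ℕ) + 1 : ℕ)) = W (d - l - 1) := congrArg W (by push_cast; ring)
        rw [e1, e2] at h'
        rw [e1, e2, e3, e4] at hg
        omega
    intro l
    exact aux ((b - d).toNat + (d - a).toNat) l (by omega)
  -- nondegeneracy gives the equivalence with the dual
  have hkerS : LinearMap.ker (S : H →ₗ[ℂ] Module.Dual ℂ H) = ⊥ := by
    ext u
    simp only [LinearMap.mem_ker, Submodule.mem_bot]
    constructor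
    · intro hu
      exact hnd u (fun v => by rw [hu]; rfl)
    · rintro rfl; simp
  have hinj : Function.Injective (S : H →ₗ[ℂ] Module.Dual ℂ H) := LinearMap.ker_eq_bot.mp hkerS
  let e : H ≃ₗ[ℂ] Module.Dual ℂ H :=
    LinearMap.linearEquivOfInjective S hinj (Subspace.dual_finrank_eq).symm
  have he : ∀ w : H, (e : H →ₗ[ℂ] Module.Dual ℂ H) w = S w := fun w => rfl
  refine ⟨part1, ?_⟩
  intro l u hu hyp
  have hyv : ∀ v ∈ W (d + l), S ((N ^ l) u) v = 0 := by
    intro v hv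
    rw [skewPow l u v, hyp v hv, mul_zero]
  set P : Submodule ℂ H :=
    Submodule.comap (e : H →ₗ[ℂ] Module.Dual ℂ H) ((W (d + l)).dualAnnihilator) with hP
  have hmemP : ∀ w : H, w ∈ P ↔ ∀ v ∈ W (d + l), S w v = 0 := by
    intro w
    rw [hP, Submodule.mem_comap, Submodule.mem_dualAnnihilator]
    constructor
    · intro hw v hv
      have := hw v hv
      rwa [he w] at this
    · intro hw v hv
      rw [he w]
      exact hw v hv
  have hfinP : finrank ℂ P = finrank ℂ (W (d - l - 1)) := by
    rw [hP, Submodule.comap_equiv_eq_map_symm, LinearEquiv.finrank_map_eq]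
    have h1' := LinearEquiv.finrank_eq (Subspace.quotEquivAnnihilator (W (d + l)))
    have h2' := Submodule.finrank_quotient_add_finrank (W (d + l))
    have h3' := Fl l
    omega
  have hPeq : W (d - l - 1) = P := by
    apply Submodule.eq_of_le_of_finrank_le
    · intro w hw
      exact (hmemP w).mpr (fun v hv => key l w hw v hv)
    · exact le_of_eq hfinP
  have hy : (N ^ l) u ∈ W (d - l - 1) := by
    rw [hPeq]
    exact (hmemP _).mpr hyv
  exact (h5 l).1 u hu hy
end

section
/- Let H be a finite-dimensional complex vector space with a real structure, and N a real nilpotent endomorphism with N^{d+1} = 0. Suppose (H, W, F) is a mixed Hodge structure such that N is a morphism of mixed Hodge structures of type (−1,−1) (i.e. N W_i ⊆ W_{i-2} and N F^p ⊆ F^{p-1}) and W = W(N,d). Then for every p, dim_ℂ Gr_F^p H = dim_ℂ Gr_F^{d-p} H, and hence dim F^p + dim conj(F^{d-p+1}) = dim H for all p. -/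
/-!
On each `Gr^W_k` the Hodge filtration is opposed to its conjugate, so
`h(k,q) + h(k,k-q+1) = dim Gr^W_k` with `h(k,q) = dim F^q Gr^W_k`. The isomorphism
`N^l : Gr^W_{d+l} ≅ Gr^W_{d-l}` maps `F^q` into `F^{q-l}`; opposedness on both sides turns the
resulting inequality `h(d+l,q) ≤ h(d-l,q-l)` into an equality. Hence the defect
`h(k,q) + h(k,d-q+1) - dim Gr^W_k` is antisymmetric under `k ↦ 2d - k`, and telescoping over `k`
gives `dim F^q + dim F^(d-q+1) = dim H`. Both claims follow, the second because conjugation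
preserves dimensions.
-/

open Module Submodule

theorem finrank_map_semilinearEquiv {R M M₂ : Type*} [Ring R] [AddCommGroup M] [Module R M]
    [AddCommGroup M₂] [Module R M₂] {σ σ' : R →+* R} [RingHomInvPair σ σ'] [RingHomInvPair σ' σ]
    (e : M ≃ₛₗ[σ] M₂) (p : Submodule R M) :
    finrank R (p.map (e : M →ₛₗ[σ] M₂)) = finrank R p := by
  have hσ : Function.Bijective σ :=
    ⟨Function.LeftInverse.injective (g := σ') fun _ => RingHomInvPair.comp_apply_eq,
      Function.RightInverse.surjective (g := σ') fun _ => RingHomInvPair.comp_apply_eq₂⟩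
  have h := lift_rank_eq_of_equiv_equiv σ (e.submoduleMap p).toAddEquiv hσ
    (fun r x => (e.submoduleMap p).map_smulₛₗ r x)
  simpa only [finrank, Cardinal.toNat_lift] using (congrArg Cardinal.toNat h).symm

theorem eq_of_increments_antisymm (β : ℤ → ℤ) (c : ℤ)
    (h : ∀ l : ℕ, β (c + l) - β (c + l - 1) + (β (c - l) - β (c - l - 1)) = 0) :
    ∀ t : ℕ, β (c + t) = β (c - t - 1)
  | 0 => by have := h 0; simp only [Nat.cast_zero, add_zero, sub_zero] at this ⊢; linarith
  | t + 1 => by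
    have hstep := h (t + 1)
    have ih := eq_of_increments_antisymm β c h t
    rw [show c + ↑(t + 1) - 1 = c + t by push_cast; ring] at hstep
    rw [show c - ↑(t + 1) = c - t - 1 by push_cast; ring] at hstep ⊢
    linarith

/-- Read `h k q` as `dim F^q Gr^W_k` and `m k` as `dim Gr^W_k`. -/
theorem add_sub_add_eq_zero_of_opposed (h : ℤ → ℤ → ℤ) (m : ℤ → ℤ) (d : ℤ)
    (hopp : ∀ k q, h k q + h k (k - q + 1) = m k)
    (hle : ∀ (l : ℕ) q, h (d + l) q ≤ h (d - l) (q - l))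
    (hm : ∀ l : ℕ, m (d + l) = m (d - l)) (q : ℤ) (l : ℕ) :
    h (d + l) q + h (d + l) (d - q + 1) - m (d + l)
      + (h (d - l) q + h (d - l) (d - q + 1) - m (d - l)) = 0 := by
  have hopp' : ∀ k q q', q + q' = k + 1 → h k q + h k q' = m k := fun k q q' hqq' => by
    rw [show q' = k - q + 1 by omega]; exact hopp k q
  have hstrict : ∀ q, h (d + l) q = h (d - l) (q - l) := fun q => by
    have := hle l (d + l - q + 1)
    rw [show d + l - q + 1 - l = d - q + 1 by ring] at this
    linarith [hle l q, hopp (d + l) q, hopp' (d - l) (q - l) (d - q + 1) (by ring), hm l]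
  rw [hstrict q, hstrict (d - q + 1)]
  linarith [hopp' (d - l) (q - l) (d - q + 1) (by ring),
    hopp' (d - l) (d - q + 1 - l) q (by ring), hm l]

section

variable {K E : Type*} [DivisionRing K] [AddCommGroup E] [Module K E]

theorem finrank_map_add_finrank_inf_ker [FiniteDimensional K E] {E' : Type*} [AddCommGroup E']
    [Module K E'] (f : E →ₗ[K] E') (U : Submodule K E) :
    finrank K (U.map f) + finrank K ↥(U ⊓ LinearMap.ker f) = finrank K U := by
  rw [← LinearMap.range_domRestrict, ← map_comap_subtype, finrank_map_subtype_eq,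
    ← LinearMap.ker_domRestrict]
  exact (f.domRestrict U).finrank_range_add_finrank_ker

theorem finrank_map_sup_add_finrank_inf_comap [FiniteDimensional K E] {E' : Type*}
    [AddCommGroup E'] [Module K E'] [FiniteDimensional K E'] (f : E →ₗ[K] E')
    (U : Submodule K E) (W : Submodule K E') :
    finrank K ↥(U.map f ⊔ W) + finrank K ↥(U ⊓ W.comap f) = finrank K U + finrank K W := by
  have hsup := finrank_sup_add_finrank_inf_eq (U.map f) W
  have hU := finrank_map_add_finrank_inf_ker f U
  have hU' := finrank_map_add_finrank_inf_ker f (U ⊓ W.comap f)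
  rw [map_inf_eq_map_inf_comap] at hsup
  rw [inf_assoc, inf_eq_right.2 (LinearMap.ker_le_comap f)] at hU'
  omega

theorem map_pow_le_of_map_le {f : E →ₗ[K] E} {G : ℤ → Submodule K E} {a : ℤ}
    (h : ∀ i, (G i).map f ≤ G (i - a)) (l : ℕ) {i j : ℤ} (hij : j = i - l * a) :
    (G i).map (f ^ l) ≤ G j := by
  induction l generalizing i with
  | zero => simp [hij, Module.End.one_eq_id]
  | succ l ih =>
    rw [pow_succ, Module.End.mul_eq_comp, map_comp]
    exact (map_mono (h i)).trans (ih (by rw [hij]; push_cast; ring))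

/-- `grFinrank W X k` is the dimension of the image of `X ⊓ W k` in `W k ⧸ W (k - 1)`. -/
noncomputable def grFinrank (W : ℤ → Submodule K E) (X : Submodule K E) (k : ℤ) : ℤ :=
  finrank K ↥(X ⊓ W k) - finrank K ↥(X ⊓ W (k - 1))

namespace grFinrank

variable {W : ℤ → Submodule K E}

theorem eq_finrank_sup_sub [FiniteDimensional K E] (hW : Monotone W) (X : Submodule K E)
    (k : ℤ) : grFinrank W X k = finrank K ↥(X ⊓ W k ⊔ W (k - 1)) - finrank K (W (k - 1)) := by
  have h := finrank_sup_add_finrank_inf_eq (X ⊓ W k) (W (k - 1))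
  rw [inf_assoc, inf_eq_right.2 (hW (by omega))] at h
  rw [grFinrank]
  omega

theorem eq_finrank_map_sup_sub [FiniteDimensional K E] (f : E →ₗ[K] E) {X : Submodule K E}
    {k k' : ℤ} (hker : X ⊓ W k ⊓ (W (k' - 1)).comap f = X ⊓ W (k - 1)) :
    grFinrank W X k = finrank K ↥((X ⊓ W k).map f ⊔ W (k' - 1)) - finrank K (W (k' - 1)) := by
  have h := finrank_map_sup_add_finrank_inf_comap f (X ⊓ W k) (W (k' - 1))
  rw [hker] at h
  rw [grFinrank]
  omega

theorem le_of_map [FiniteDimensional K E] (hW : Monotone W) (f : E →ₗ[K] E)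
    {X Y : Submodule K E} {k k' : ℤ} (hker : W k ⊓ (W (k' - 1)).comap f = W (k - 1))
    (hmap : (X ⊓ W k).map f ≤ Y ⊓ W k') : grFinrank W X k ≤ grFinrank W Y k' := by
  rw [eq_finrank_map_sup_sub f (k' := k') (by rw [inf_assoc, hker]), eq_finrank_sup_sub hW]
  have := finrank_mono (sup_le_sup_right hmap (W (k' - 1)))
  omega

theorem top_eq_of_map [FiniteDimensional K E] (hW : Monotone W) (f : E →ₗ[K] E) {k k' : ℤ}
    (hker : W k ⊓ (W (k' - 1)).comap f = W (k - 1)) (hmap : (W k).map f ≤ W k')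
    (hsurj : W k' ≤ (W k).map f ⊔ W (k' - 1)) : grFinrank W ⊤ k = grFinrank W ⊤ k' := by
  rw [eq_finrank_map_sup_sub f (k' := k') (by rw [top_inf_eq, top_inf_eq, hker]),
    eq_finrank_sup_sub hW, top_inf_eq, top_inf_eq,
    le_antisymm (sup_le hmap (hW (by omega))) hsurj, sup_eq_left.2 (hW (by omega))]

theorem add_eq_top_of_opposed [FiniteDimensional K E] (hW : Monotone W) {X Y : Submodule K E}
    {k : ℤ} (hinf : (X ⊓ W k ⊔ W (k - 1)) ⊓ (Y ⊓ W k ⊔ W (k - 1)) = W (k - 1))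
    (hsup : X ⊓ W k ⊔ Y ⊓ W k ⊔ W (k - 1) = W k) :
    grFinrank W X k + grFinrank W Y k = grFinrank W ⊤ k := by
  have h := finrank_sup_add_finrank_inf_eq (X ⊓ W k ⊔ W (k - 1)) (Y ⊓ W k ⊔ W (k - 1))
  rw [sup_sup_sup_comm, sup_idem, hsup, hinf] at h
  rw [eq_finrank_sup_sub hW, eq_finrank_sup_sub hW, eq_finrank_sup_sub hW, top_inf_eq,
    sup_eq_left.2 (hW (by omega))]
  omega

theorem map_semilinearEquiv {σ σ' : K →+* K} [RingHomInvPair σ σ'] [RingHomInvPair σ' σ]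
    (e : E ≃ₛₗ[σ] E) {k : ℤ} (hk : (W k).map (e : E →ₛₗ[σ] E) = W k)
    (hk' : (W (k - 1)).map (e : E →ₛₗ[σ] E) = W (k - 1)) (X : Submodule K E) :
    grFinrank W (X.map (e : E →ₛₗ[σ] E)) k = grFinrank W X k := by
  have h : ∀ i, (W i).map (e : E →ₛₗ[σ] E) = W i →
      finrank K ↥(X.map (e : E →ₛₗ[σ] E) ⊓ W i) = finrank K ↥(X ⊓ W i) := fun i hi => by
    conv_lhs => rw [← hi, ← map_inf _ e.injective]
    exact finrank_map_semilinearEquiv e _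
  rw [grFinrank, grFinrank, h k hk, h (k - 1) hk']

theorem finrank_add_finrank_eq_of_antisymm [FiniteDimensional K E] {a b : ℤ}
    (hlow : ∀ i ≤ a, W i = ⊥) (hhigh : ∀ i, b ≤ i → W i = ⊤) {X Y : Submodule K E} (d : ℤ)
    (h : ∀ l : ℕ, grFinrank W X (d + l) + grFinrank W Y (d + l) - grFinrank W ⊤ (d + l)
      + (grFinrank W X (d - l) + grFinrank W Y (d - l) - grFinrank W ⊤ (d - l)) = 0) :
    finrank K X + finrank K Y = finrank K E := by
  set β : ℤ → ℤ := fun k =>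
    finrank K ↥(X ⊓ W k) + finrank K ↥(Y ⊓ W k) - finrank K (W k) with hβ
  have hinc : ∀ k, grFinrank W X k + grFinrank W Y k - grFinrank W ⊤ k = β k - β (k - 1) :=
    fun k => by simp only [grFinrank, hβ]; rw [top_inf_eq, top_inf_eq]; ring
  obtain ⟨t, hbt, hat⟩ : ∃ t : ℕ, b ≤ d + t ∧ d - t - 1 ≤ a :=
    ⟨(max (b - d) (d - a)).toNat, by omega, by omega⟩
  have := eq_of_increments_antisymm β d (fun l => by simpa only [hinc] using h l) t
  simp only [hβ] at this
  rw [hhigh _ hbt, hlow _ hat, inf_top_eq, inf_top_eq, inf_bot_eq, inf_bot_eq] at this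
  simp only [finrank_top, finrank_bot] at this
  omega

end grFinrank

end

theorem gr_F_dim_symmetric_general
    (H : Type) [AddCommGroup H] [Module ℂ H] [FiniteDimensional ℂ H]
    (σ : H → H)
    (hσadd : ∀ u v : H, σ (u + v) = σ u + σ v)
    (hσsmul : ∀ (c : ℂ) (v : H), σ (c • v) = (starRingEnd ℂ c) • σ v)
    (hσinv : ∀ v : H, σ (σ v) = v)
    (d : ℕ) (N : H →ₗ[ℂ] H)
    (W : ℤ → Submodule ℂ H) (F : ℤ → Submodule ℂ H)
    -- W is an increasing exhaustive filtration defined over ℝ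
    (hWinc : ∀ i : ℤ, W i ≤ W (i + 1))
    (hWlow : ∃ a, ∀ i ≤ a, W i = ⊥) (hWhigh : ∃ b, ∀ i : ℤ, b ≤ i → W i = ⊤)
    (hWreal : ∀ i : ℤ, Submodule.span ℂ (σ '' (W i : Set H)) = W i)
    -- mixed Hodge structure: on each Gr^W_k, the induced filtration is
    -- k-opposed to its conjugate
    (hMHS : ∀ k p : ℤ,
      (((F p ⊓ W k) ⊔ W (k - 1)) ⊓
        ((Submodule.span ℂ (σ '' (F (k - p + 1) : Set H)) ⊓ W k) ⊔ W (k - 1))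
          = W (k - 1)) ∧
      (((F p ⊓ W k) ⊔
        (Submodule.span ℂ (σ '' (F (k - p + 1) : Set H)) ⊓ W k) ⊔ W (k - 1))
          = W k))
    -- N is a morphism of mixed Hodge structures of type (-1,-1)
    (hNW : ∀ i : ℤ, Submodule.map N (W i) ≤ W (i - 2))
    (hNF : ∀ p : ℤ, Submodule.map N (F p) ≤ F (p - 1))
    -- W = W(N,d): N^l induces isomorphisms Gr^W_{d+l} ≅ Gr^W_{d-l}
    (hWN : ∀ l : ℕ,
      (∀ x ∈ W ((d : ℤ) + l), (N ^ l) x ∈ W ((d : ℤ) - l - 1) →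
        x ∈ W ((d : ℤ) + l - 1)) ∧
      (W ((d : ℤ) - l) ≤
        Submodule.map (N ^ l : H →ₗ[ℂ] H) (W ((d : ℤ) + l)) ⊔ W ((d : ℤ) - l - 1))) :
    ∀ p : ℤ,
      ((Module.finrank ℂ (F p) : ℤ) - Module.finrank ℂ (F (p + 1))
        = (Module.finrank ℂ (F ((d : ℤ) - p)) : ℤ)
          - Module.finrank ℂ (F ((d : ℤ) - p + 1))) ∧
      (Module.finrank ℂ (F p) +
        Module.finrank ℂ
          (Submodule.span ℂ (σ '' (F ((d : ℤ) - p + 1) : Set H)))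
        = Module.finrank ℂ H) := by
  have hW : Monotone W := monotone_int_of_le_succ hWinc
  obtain ⟨a, ha⟩ := hWlow
  obtain ⟨b, hb⟩ := hWhigh
  let c : H ≃ₗ⋆[ℂ] H := LinearEquiv.ofInvolutive ⟨⟨σ, hσadd⟩, hσsmul⟩ hσinv
  have hconj : ∀ S : Submodule ℂ H, span ℂ (σ '' S) = S.map (c : H →ₗ⋆[ℂ] H) := fun S => by
    rw [← span_eq (S.map _), map_coe]; rfl
  simp only [hconj] at hWreal hMHS
  have hopp : ∀ k q, grFinrank W (F q) k + grFinrank W (F (k - q + 1)) k = grFinrank W ⊤ k :=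
    fun k q => by
      rw [← grFinrank.map_semilinearEquiv c (hWreal k) (hWreal (k - 1)) (F (k - q + 1))]
      exact grFinrank.add_eq_top_of_opposed hW (hMHS k q).1 (hMHS k q).2
  have hker : ∀ l : ℕ, W (d + l) ⊓ (W (d - l - 1)).comap (N ^ l) = W (d + l - 1) := fun l =>
    le_antisymm (fun x hx => (hWN l).1 x hx.1 hx.2)
      (le_inf (hW (by omega)) (map_le_iff_le_comap.1 (map_pow_le_of_map_le hNW l (by ring))))
  have hle : ∀ (l : ℕ) q, grFinrank W (F q) (d + l) ≤ grFinrank W (F (q - l)) (d - l) :=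
    fun l q => grFinrank.le_of_map hW (N ^ l) (hker l) ((map_inf_le _).trans (inf_le_inf
      (map_pow_le_of_map_le hNF l (by ring)) (map_pow_le_of_map_le hNW l (by ring))))
  have hm : ∀ l : ℕ, grFinrank W ⊤ (d + l) = grFinrank W ⊤ (d - l) := fun l =>
    grFinrank.top_eq_of_map hW (N ^ l) (hker l) (map_pow_le_of_map_le hNW l (by ring)) (hWN l).2
  have hdual : ∀ q, finrank ℂ (F q) + finrank ℂ (F (d - q + 1)) = finrank ℂ H := fun q =>
    grFinrank.finrank_add_finrank_eq_of_antisymm ha hb d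
      (add_sub_add_eq_zero_of_opposed (fun k q => grFinrank W (F q) k) _ d hopp hle hm q)
  refine fun p => ⟨?_, by rw [hconj, finrank_map_semilinearEquiv]; exact hdual p⟩
  have h₁ := hdual p
  have h₂ := hdual (p + 1)
  rw [show (d : ℤ) - (p + 1) + 1 = d - p by ring] at h₂
  omega

/-- Symmetry of Hodge filtration dimensions for a mixed Hodge structure whose
weight filtration is the monodromy weight filtration of a nilpotent `(-1,-1)`
morphism `N` centered at `d`.  Here `H` is a finite-dimensional complex vector
space with real structure `σ` (conjugation of a subspace `S` is
`span ℂ (σ '' S)`), `(H, W, F)` is a mixed Hodge structure (each `Gr^W_k`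
carries a pure Hodge structure of weight `k`, expressed by the `d`-opposedness
of the induced filtration and its conjugate inside `W k` modulo `W (k-1)`),
`N` is real, `N^{d+1} = 0`, `N` has type `(-1,-1)` and `W = W(N,d)`.
Then `dim Gr_F^p = dim Gr_F^{d-p}` and
`dim F^p + dim conj(F^{d-p+1}) = dim H` for all `p`. -/
theorem gr_F_dim_symmetric
    (H : Type) [AddCommGroup H] [Module ℂ H] [FiniteDimensional ℂ H]
    (σ : H → H)
    (hσadd : ∀ u v : H, σ (u + v) = σ u + σ v)
    (hσsmul : ∀ (c : ℂ) (v : H), σ (c • v) = (starRingEnd ℂ c) • σ v)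
    (hσinv : ∀ v : H, σ (σ v) = v)
    (d : ℕ) (N : H →ₗ[ℂ] H)
    (hNreal : ∀ v : H, σ (N v) = N (σ v))
    (hNnil : N ^ (d + 1) = 0)
    (W : ℤ → Submodule ℂ H) (F : ℤ → Submodule ℂ H)
    -- W is an increasing exhaustive filtration defined over ℝ
    (hWinc : ∀ i : ℤ, W i ≤ W (i + 1))
    (hWlow : ∃ a, ∀ i ≤ a, W i = ⊥) (hWhigh : ∃ b, ∀ i : ℤ, b ≤ i → W i = ⊤)
    (hWreal : ∀ i : ℤ, Submodule.span ℂ (σ '' (W i : Set H)) = W i)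
    -- F is a decreasing exhaustive filtration
    (hFdec : ∀ p : ℤ, F (p + 1) ≤ F p)
    (hFlow : ∃ a, ∀ p ≤ a, F p = ⊤) (hFhigh : ∃ b, ∀ p : ℤ, b ≤ p → F p = ⊥)
    -- mixed Hodge structure: on each Gr^W_k, the induced filtration is
    -- k-opposed to its conjugate
    (hMHS : ∀ k p : ℤ,
      (((F p ⊓ W k) ⊔ W (k - 1)) ⊓
        ((Submodule.span ℂ (σ '' (F (k - p + 1) : Set H)) ⊓ W k) ⊔ W (k - 1))
          = W (k - 1)) ∧
      (((F p ⊓ W k) ⊔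
        (Submodule.span ℂ (σ '' (F (k - p + 1) : Set H)) ⊓ W k) ⊔ W (k - 1))
          = W k))
    -- N is a morphism of mixed Hodge structures of type (-1,-1)
    (hNW : ∀ i : ℤ, Submodule.map N (W i) ≤ W (i - 2))
    (hNF : ∀ p : ℤ, Submodule.map N (F p) ≤ F (p - 1))
    -- W = W(N,d): N^l induces isomorphisms Gr^W_{d+l} ≅ Gr^W_{d-l}
    (hWN : ∀ l : ℕ,
      (∀ x ∈ W ((d : ℤ) + l), (N ^ l) x ∈ W ((d : ℤ) - l - 1) →
        x ∈ W ((d : ℤ) + l - 1)) ∧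
      (W ((d : ℤ) - l) ≤
        Submodule.map (N ^ l : H →ₗ[ℂ] H) (W ((d : ℤ) + l)) ⊔ W ((d : ℤ) - l - 1))) :
    ∀ p : ℤ,
      ((Module.finrank ℂ (F p) : ℤ) - Module.finrank ℂ (F (p + 1))
        = (Module.finrank ℂ (F ((d : ℤ) - p)) : ℤ)
          - Module.finrank ℂ (F ((d : ℤ) - p + 1))) ∧
      (Module.finrank ℂ (F p) +
        Module.finrank ℂ
          (Submodule.span ℂ (σ '' (F ((d : ℤ) - p + 1) : Set H)))
        = Module.finrank ℂ H) :=
  gr_F_dim_symmetric_general H σ hσadd hσsmul hσinv d N W F hWinc hWlow hWhigh hWreal hMHS hNW hNF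
    hWN
end

section
/- Let V be a finite-dimensional complex vector space, N a nilpotent endomorphism, and u ∈ V with N^n u ≠ 0, N^{n+1}u = 0. Fix 0 ≤ k ≤ n+1 and let W = span{u, Nu, ..., N^n u}. For z with Im(z) ≠ 0, the subspaces exp(zN)·span{u, Nu, ..., N^{n-k}u} and exp(z̄N)·span{u, Nu, ..., N^{k-1}u} intersect trivially and together span W; i.e., W = exp(zN)·span{N^l u : 0 ≤ l ≤ n−k} ⊕ exp(z̄N)·span{N^l u : 0 ≤ l ≤ k−1}. -/
/-!
Write the vectors of `W` as `p(N) u`. As `N ^ n u ≠ 0 = N ^ (n + 1) u`, `p(N) u = 0` iff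
`X ^ (n + 1) ∣ p`; hence `span {N ^ l u | l < r}` has dimension `r` for `r ≤ n + 1`, and `exp (x N)`
acts on `W` as multiplication by the truncated exponential `e_x`, which is injective.

If `exp (z N) r(N) u = exp (z̄ N) q(N) u` with `deg r < n + 1 - k` and `deg q < k`, applying
`exp (-z N)` gives `e_w q ≡ r mod X ^ (n + 1)` for `w = z̄ - z ≠ 0`. So the coefficient of `X ^ m`
in `e_w q` vanishes for `n + 1 - k ≤ m ≤ n`; multiplied by `m! / w ^ m` it is the value at `m` of
`∑ l, q_l w⁻ˡ m (m - 1) ⋯ (m - l + 1)`, a polynomial of degree `< k` with `k` roots. It is therefore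
zero, and `q = 0` since the falling factorials are linearly independent. A dimension count then
gives the sum.
-/

open Polynomial Finset Module
open scoped Nat

theorem Submodule.sup_eq_of_disjoint_of_finrank_le {K V : Type*} [DivisionRing K] [AddCommGroup V]
    [Module K V] {A B W : Submodule K V} [FiniteDimensional K W] (hA : A ≤ W) (hB : B ≤ W)
    (hAB : Disjoint A B) (hdim : finrank K W ≤ finrank K A + finrank K B) : A ⊔ B = W := by
  have := Submodule.finiteDimensional_of_le hA
  have := Submodule.finiteDimensional_of_le hB
  refine Submodule.eq_of_le_of_finrank_le (sup_le hA hB) ?_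
  rwa [← add_zero (finrank K ↥(A ⊔ B)), ← finrank_bot K V, ← disjoint_iff.mp hAB,
    Submodule.finrank_sup_add_finrank_inf_eq]

theorem Polynomial.aeval_eq_of_X_pow_dvd_sub {R A : Type*} [CommRing R] [Ring A] [Algebra R A]
    {a : A} {K : ℕ} (ha : a ^ K = 0) {p q : R[X]} (h : X ^ K ∣ p - q) :
    aeval a p = aeval a q := by
  obtain ⟨r, hr⟩ := h
  rw [← sub_eq_zero, ← map_sub, hr, map_mul, map_pow, aeval_X, ha, zero_mul]

section Exp

variable {𝕜 : Type*} [Field 𝕜] [CharZero 𝕜]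

noncomputable def expTrunc (K : ℕ) (x : 𝕜) : 𝕜[X] :=
  PowerSeries.trunc K (PowerSeries.rescale x (PowerSeries.exp 𝕜))

theorem coeff_expTrunc {K m : ℕ} (x : 𝕜) (hm : m < K) :
    (expTrunc K x).coeff m = x ^ m / (m ! : 𝕜) := by
  simp [expTrunc, PowerSeries.coeff_trunc, hm, PowerSeries.coeff_exp, div_eq_mul_inv]

theorem X_pow_dvd_expTrunc_mul_expTrunc_sub (K : ℕ) (x y : 𝕜) :
    X ^ K ∣ expTrunc K x * expTrunc K y - expTrunc K (x + y) := by
  have h : PowerSeries.trunc K (expTrunc K x * expTrunc K y : PowerSeries 𝕜) =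
      expTrunc K (x + y) := by
    rw [expTrunc, expTrunc, PowerSeries.trunc_trunc_mul_trunc, PowerSeries.exp_mul_exp_eq_exp_add]
    rfl
  refine X_pow_dvd_iff.mpr fun d hd => ?_
  rw [coeff_sub, ← h, PowerSeries.coeff_trunc, if_pos hd, ← Polynomial.coe_mul,
    Polynomial.coeff_coe, sub_self]

theorem expTrunc_zero {K : ℕ} (hK : 0 < K) : expTrunc K (0 : 𝕜) = 1 := by
  obtain ⟨K, rfl⟩ := Nat.exists_eq_add_of_lt hK
  simp [expTrunc, PowerSeries.trunc_one]

variable {A : Type*} [Ring A] [Algebra 𝕜 A] {a : A} {K : ℕ}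

theorem aeval_expTrunc (x : 𝕜) :
    aeval a (expTrunc K x) = ∑ j ∈ range K, (x ^ j / (j ! : 𝕜)) • a ^ j := by
  rw [aeval_def, expTrunc, PowerSeries.eval₂_trunc_eq_sum_range]
  refine sum_congr rfl fun j _ => ?_
  simp [PowerSeries.coeff_exp, Algebra.smul_def, div_eq_mul_inv]

theorem aeval_expTrunc_mul (ha : a ^ K = 0) (x y : 𝕜) :
    aeval a (expTrunc K x) * aeval a (expTrunc K y) = aeval a (expTrunc K (x + y)) := by
  rw [← map_mul, aeval_eq_of_X_pow_dvd_sub ha (X_pow_dvd_expTrunc_mul_expTrunc_sub K x y)]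

end Exp

section Cyclic

variable {K V : Type*} [Field K] [AddCommGroup V] [Module K V] (N : Module.End K V) (u : V)

noncomputable def cyclicMap : K[X] →ₗ[K] V := LinearMap.applyₗ u ∘ₗ (aeval N).toLinearMap

@[simp]
theorem cyclicMap_apply (p : K[X]) : cyclicMap N u p = aeval N p u := rfl

theorem span_range_pow_apply_eq_map_degreeLT (r : ℕ) :
    Submodule.span K (Set.range fun l : Fin r => (N ^ (l : ℕ)) u) =
      (degreeLT K r).map (cyclicMap N u) := by
  classical
  rw [degreeLT_eq_span_X_pow, Submodule.map_span]
  congr 1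
  ext v
  simp [Fin.exists_iff]

theorem aeval_cyclicMap (p q : K[X]) : aeval N p (cyclicMap N u q) = cyclicMap N u (p * q) := by
  simp [aeval_mul]

variable {N u} {n : ℕ}

theorem lt_of_pow_eq_zero_of_pow_apply_ne_zero {m : ℕ} (hm : N ^ m = 0) (hu : (N ^ n) u ≠ 0) :
    n < m :=
  lt_of_not_ge fun h => hu (by rw [pow_eq_zero_of_le h hm, LinearMap.zero_apply])

theorem X_pow_dvd_of_aeval_apply_eq_zero (hu : (N ^ n) u ≠ 0) (hu' : (N ^ (n + 1)) u = 0)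
    {p : K[X]} (hp : aeval N p u = 0) : X ^ (n + 1) ∣ p := by
  by_contra hdvd
  have hp0 : p ≠ 0 := by rintro rfl; exact hdvd (dvd_zero _)
  set t := p.natTrailingDegree
  obtain ⟨s, hs⟩ : X ^ t ∣ p :=
    X_pow_dvd_iff.mpr fun d hd => coeff_eq_zero_of_lt_natTrailingDegree hd
  have ht : t ≤ n := by
    by_contra! h
    exact hdvd ((pow_dvd_pow X h).trans ⟨s, hs⟩)
  have hs0 : s.eval 0 ≠ 0 := by
    have : p.coeff t ≠ 0 := trailingCoeff_nonzero_iff_nonzero.mpr hp0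
    rwa [hs, coeff_X_pow_mul', if_pos le_rfl, Nat.sub_self, coeff_zero_eq_eval_zero] at this
  -- `N ^ n u` is a `0`-eigenvector, so `s(N)` acts on it by the nonzero scalar `s(0)`.
  have heig : N.HasEigenvector 0 ((N ^ n) u) := by
    refine ⟨Module.End.mem_eigenspace_iff.mpr ?_, hu⟩
    rw [zero_smul, ← Module.End.mul_apply, ← pow_succ']
    exact hu'
  have hvanish : aeval N s ((N ^ n) u) = 0 := by
    calc aeval N s ((N ^ n) u) = aeval N (X ^ (n - t) * p) u := by
          rw [hs, ← mul_assoc, ← pow_add, Nat.sub_add_cancel ht, mul_comm, aeval_mul,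
            Module.End.mul_apply, map_pow, aeval_X]
      _ = 0 := by rw [aeval_mul, Module.End.mul_apply, hp, map_zero]
  rw [Module.End.aeval_apply_of_hasEigenvector heig] at hvanish
  exact hs0 ((smul_eq_zero.mp hvanish).resolve_right hu)

theorem range_cyclicMap_le (hu' : (N ^ (n + 1)) u = 0) :
    LinearMap.range (cyclicMap N u) ≤ (degreeLT K (n + 1)).map (cyclicMap N u) := by
  rintro _ ⟨p, rfl⟩
  have hmod := degree_modByMonic_lt p (monic_X_pow (R := K) (n + 1))
  rw [degree_X_pow] at hmod
  refine ⟨p %ₘ X ^ (n + 1), mem_degreeLT.mpr hmod, ?_⟩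
  conv_rhs => rw [← modByMonic_add_div p (X ^ (n + 1)), mul_comm]
  simp [aeval_mul, hu']

theorem finrank_map_cyclicMap_degreeLT (hu : (N ^ n) u ≠ 0) (hu' : (N ^ (n + 1)) u = 0)
    {r : ℕ} (hr : r ≤ n + 1) :
    finrank K ((degreeLT K r).map (cyclicMap N u)) = r := by
  have hinj : Function.Injective ((cyclicMap N u).domRestrict (degreeLT K r)) := by
    refine LinearMap.injective_domRestrict_iff.mpr (Submodule.disjoint_def.mpr fun p hp hker => ?_)
    refine eq_zero_of_dvd_of_degree_lt (X_pow_dvd_of_aeval_apply_eq_zero hu hu' hker) ?_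
    rw [degree_X_pow]
    exact (mem_degreeLT.mp hp).trans_le (by exact_mod_cast hr)
  rw [← LinearMap.range_domRestrict, LinearMap.finrank_range_of_inj hinj,
    (degreeLTEquiv K r).finrank_eq, finrank_fin_fun]

end Cyclic

theorem Polynomial.coeff_mul_eq_sum_range {R : Type*} [CommSemiring R] (e : R[X]) {q : R[X]}
    {N : ℕ} (hq : q.natDegree < N) (m : ℕ) :
    (e * q).coeff m = ∑ l ∈ range N, q.coeff l * if l ≤ m then e.coeff (m - l) else 0 := by
  conv_lhs => rw [as_sum_range_C_mul_X_pow' q hq, mul_sum, finsetSum_coeff]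
  refine sum_congr rfl fun l _ => ?_
  rw [mul_left_comm, coeff_C_mul, mul_comm e, coeff_X_pow_mul']

section Pade

variable {𝕜 : Type*} [Field 𝕜] [CharZero 𝕜]

theorem descFactorial_div_pow_eq {w : 𝕜} (hw : w ≠ 0) {l m : ℕ} (h : l ≤ m) :
    (m.descFactorial l : 𝕜) / w ^ l = m ! / w ^ m * (w ^ (m - l) / ((m - l)! : 𝕜)) := by
  have hfact : ((m - l)! : 𝕜) * m.descFactorial l = m ! := by
    exact_mod_cast Nat.factorial_mul_descFactorial h
  have hpow : w ^ m = w ^ (m - l) * w ^ l := by rw [← pow_add, Nat.sub_add_cancel h]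
  have hfact_ne : ((m - l)! : 𝕜) ≠ 0 := Nat.cast_ne_zero.mpr (Nat.factorial_ne_zero _)
  rw [← hfact, hpow]
  field_simp

theorem eval_sum_smul_descPochhammer {w : 𝕜} (hw : w ≠ 0) {e q : 𝕜[X]} {m N : ℕ}
    (he : ∀ j ≤ m, e.coeff j = w ^ j / (j ! : 𝕜)) (hq : q.natDegree < N) :
    (∑ l ∈ range N, (q.coeff l / w ^ l) • descPochhammer 𝕜 l).eval (m : 𝕜) =
      m ! / w ^ m * (e * q).coeff m := by
  rw [coeff_mul_eq_sum_range e hq, mul_sum, eval_finsetSum]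
  refine sum_congr rfl fun l _ => ?_
  rw [eval_smul, descPochhammer_eval_eq_descFactorial, smul_eq_mul]
  split_ifs with hlm
  · rw [he _ (Nat.sub_le m l), div_mul_eq_mul_div, mul_div_assoc,
      descFactorial_div_pow_eq hw hlm]
    ring
  · rw [Nat.descFactorial_eq_zero_iff_lt.mpr (not_le.mp hlm)]
    simp

noncomputable def descPochhammerSequence : Sequence 𝕜 where
  elems' := descPochhammer 𝕜
  degree_eq' l := by
    rw [degree_eq_natDegree (monic_descPochhammer 𝕜 l).ne_zero, descPochhammer_natDegree]

theorem eq_zero_of_X_pow_dvd_mul_sub {w : 𝕜} (hw : w ≠ 0) {n k : ℕ} (hk : k ≤ n + 1)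
    {e q r : 𝕜[X]} (he : ∀ m ≤ n, e.coeff m = w ^ m / (m ! : 𝕜)) (hq : q ∈ degreeLT 𝕜 k)
    (hr : r ∈ degreeLT 𝕜 (n + 1 - k)) (h : X ^ (n + 1) ∣ e * q - r) : q = 0 := by
  have hqk : ∀ l, k ≤ l → q.coeff l = 0 := fun l hl =>
    coeff_eq_zero_of_degree_lt ((mem_degreeLT.mp hq).trans_le (by exact_mod_cast hl))
  have hqn : q.natDegree < n + 1 := by
    rcases eq_or_ne q 0 with rfl | hq0
    · simp
    · exact (natDegree_lt_iff_degree_lt hq0).mpr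
        ((mem_degreeLT.mp hq).trans_le (by exact_mod_cast hk))
  set p := ∑ l ∈ range (n + 1), (q.coeff l / w ^ l) • descPochhammer 𝕜 l
  have hp_root (m : ℕ) (hm : m ∈ Ico (n + 1 - k) (n + 1)) : p.eval (m : 𝕜) = 0 := by
    obtain ⟨hkm, hmn⟩ := mem_Ico.mp hm
    have hr_m : r.coeff m = 0 :=
      coeff_eq_zero_of_degree_lt ((mem_degreeLT.mp hr).trans_le (by exact_mod_cast hkm))
    have hdiff := X_pow_dvd_iff.mp h m hmn
    rw [coeff_sub, hr_m, sub_zero] at hdiff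
    rw [eval_sum_smul_descPochhammer hw (fun j hj => he j (hj.trans (Nat.lt_succ_iff.mp hmn))) hqn,
      hdiff, mul_zero]
  have hp_deg : p ∈ degreeLT 𝕜 k := by
    refine Submodule.sum_mem _ fun l _ => ?_
    rcases lt_or_ge l k with hlk | hlk
    · refine Submodule.smul_mem _ _ (mem_degreeLT.mpr ?_)
      exact (descPochhammerSequence.degree_eq l).trans_lt (by exact_mod_cast hlk)
    · rw [hqk l hlk, zero_div, zero_smul]
      exact Submodule.zero_mem _
  have hp0 : p = 0 := by
    refine eq_zero_of_degree_lt_of_eval_index_eq_zero (Ico (n + 1 - k) (n + 1))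
      Nat.cast_injective.injOn ?_ hp_root
    rw [Nat.card_Ico, Nat.sub_sub_self hk]
    exact mem_degreeLT.mp hp_deg
  have hcoeff := linearIndependent_iff'.mp descPochhammerSequence.linearIndependent
    (range (n + 1)) (fun l => q.coeff l / w ^ l) hp0
  ext l
  rcases le_or_gt l n with hln | hln
  · simpa [hw] using hcoeff l (mem_range.mpr (Nat.lt_succ_of_le hln))
  · exact hqk l (by omega)

end Pade

section Complement

variable {𝕜 V : Type*} [Field 𝕜] [CharZero 𝕜] [AddCommGroup V] [Module 𝕜 V]
  {N : Module.End 𝕜 V} {u : V} {n K k : ℕ}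

theorem aeval_expTrunc_neg_mul (hK : N ^ K = 0) (hK0 : 0 < K) (x : 𝕜) :
    aeval N (expTrunc K (-x)) * aeval N (expTrunc K x) = 1 := by
  rw [aeval_expTrunc_mul hK, neg_add_cancel, expTrunc_zero hK0, map_one]

theorem disjoint_map_aeval_expTrunc (hK : N ^ K = 0) (hu : (N ^ n) u ≠ 0)
    (hu' : (N ^ (n + 1)) u = 0) (hk : k ≤ n + 1) {x y : 𝕜} (hxy : x ≠ y) :
    Disjoint (((degreeLT 𝕜 (n + 1 - k)).map (cyclicMap N u)).map (aeval N (expTrunc K x)))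
      (((degreeLT 𝕜 k).map (cyclicMap N u)).map (aeval N (expTrunc K y))) := by
  have hn := lt_of_pow_eq_zero_of_pow_apply_ne_zero hK hu
  refine Submodule.disjoint_def.mpr ?_
  rintro _ ⟨_, ⟨r, hr, rfl⟩, rfl⟩ ⟨_, ⟨q, hq, rfl⟩, hqr⟩
  have hcongr : cyclicMap N u (expTrunc K (-x + y) * q) = cyclicMap N u r := by
    have := congrArg (aeval N (expTrunc K (-x))) hqr
    rwa [← Module.End.mul_apply, ← Module.End.mul_apply, aeval_expTrunc_mul hK,
      aeval_expTrunc_neg_mul hK (by omega), Module.End.one_apply, aeval_cyclicMap] at this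
  have hdvd : X ^ (n + 1) ∣ expTrunc K (-x + y) * q - r := by
    refine X_pow_dvd_of_aeval_apply_eq_zero hu hu' ?_
    rw [map_sub, LinearMap.sub_apply, ← cyclicMap_apply, ← cyclicMap_apply, hcongr, sub_self]
  have hq0 : q = 0 := eq_zero_of_X_pow_dvd_mul_sub (by rwa [neg_add_eq_sub, sub_ne_zero, ne_comm])
    hk (fun m hm => coeff_expTrunc _ (by omega)) hq hr hdvd
  rw [← hqr, hq0, map_zero, map_zero]

theorem sup_map_aeval_expTrunc (hK : N ^ K = 0) (hu : (N ^ n) u ≠ 0)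
    (hu' : (N ^ (n + 1)) u = 0) (hk : k ≤ n + 1) {x y : 𝕜} (hxy : x ≠ y) :
    ((degreeLT 𝕜 (n + 1 - k)).map (cyclicMap N u)).map (aeval N (expTrunc K x)) ⊔
      ((degreeLT 𝕜 k).map (cyclicMap N u)).map (aeval N (expTrunc K y)) =
      (degreeLT 𝕜 (n + 1)).map (cyclicMap N u) := by
  have hK0 : 0 < K := by have := lt_of_pow_eq_zero_of_pow_apply_ne_zero hK hu; omega
  have hmap_le (z : 𝕜) (S : Submodule 𝕜 𝕜[X]) :
      (S.map (cyclicMap N u)).map (aeval N (expTrunc K z)) ≤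
        (degreeLT 𝕜 (n + 1)).map (cyclicMap N u) := by
    rintro _ ⟨_, ⟨p, -, rfl⟩, rfl⟩
    exact range_cyclicMap_le hu' ⟨expTrunc K z * p, (aeval_cyclicMap N u _ _).symm⟩
  have hfinrank (z : 𝕜) {r : ℕ} (hr : r ≤ n + 1) :
      finrank 𝕜 (((degreeLT 𝕜 r).map (cyclicMap N u)).map (aeval N (expTrunc K z))) = r := by
    have hinj : Function.Injective (aeval N (expTrunc K z)) :=
      Function.LeftInverse.injective (g := aeval N (expTrunc K (-z))) fun v => by
        rw [← Module.End.mul_apply, aeval_expTrunc_neg_mul hK hK0, Module.End.one_apply]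
    rw [← (Submodule.equivMapOfInjective _ hinj _).finrank_eq,
      finrank_map_cyclicMap_degreeLT hu hu' hr]
  have : FiniteDimensional 𝕜 ((degreeLT 𝕜 (n + 1)).map (cyclicMap N u)) :=
    Module.finite_of_finrank_pos (by rw [finrank_map_cyclicMap_degreeLT hu hu' le_rfl]; omega)
  refine Submodule.sup_eq_of_disjoint_of_finrank_le (hmap_le x _) (hmap_le y _)
    (disjoint_map_aeval_expTrunc hK hu hu' hk hxy) ?_
  rw [hfinrank x (Nat.sub_le _ _), hfinrank y hk, finrank_map_cyclicMap_degreeLT hu hu' le_rfl]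
  omega

end Complement

theorem exp_nilpotent_cyclic_complement_general
    (V : Type) [AddCommGroup V] [Module ℂ V]
    (N : V →ₗ[ℂ] V)
    (K : ℕ) (hK : N ^ K = 0)
    (E : ℂ → (V →ₗ[ℂ] V))
    (hE : ∀ z : ℂ,
      E z = ∑ j ∈ Finset.range K, (z ^ j / (j.factorial : ℂ)) • (N ^ j))
    (u : V) (n : ℕ) (hu : (N ^ n) u ≠ 0) (hu' : (N ^ (n + 1)) u = 0)
    (k : ℕ) (hk : k ≤ n + 1) :
    ∀ z : ℂ, z.im ≠ 0 →
      Disjoint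
        (Submodule.map (E z)
          (Submodule.span ℂ (Set.range fun l : Fin (n + 1 - k) => (N ^ (l : ℕ)) u)))
        (Submodule.map (E (starRingEnd ℂ z))
          (Submodule.span ℂ (Set.range fun l : Fin k => (N ^ (l : ℕ)) u))) ∧
      Submodule.map (E z)
          (Submodule.span ℂ (Set.range fun l : Fin (n + 1 - k) => (N ^ (l : ℕ)) u)) ⊔
        Submodule.map (E (starRingEnd ℂ z))
          (Submodule.span ℂ (Set.range fun l : Fin k => (N ^ (l : ℕ)) u)) =
      Submodule.span ℂ (Set.range fun l : Fin (n + 1) => (N ^ (l : ℕ)) u) := by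
  intro z hz
  obtain rfl : E = fun x => aeval N (expTrunc K x) := funext fun x => by rw [hE, aeval_expTrunc]
  have hz_ne : z ≠ starRingEnd ℂ z := fun h => hz (Complex.conj_eq_iff_im.mp h.symm)
  simp only [span_range_pow_apply_eq_map_degreeLT]
  exact ⟨disjoint_map_aeval_expTrunc hK hu hu' hk hz_ne, sup_map_aeval_expTrunc hK hu hu' hk hz_ne⟩

/-- Direct-sum reformulation of the wedge computation: if `N^n u ≠ 0` and
`N^{n+1} u = 0`, then for `0 ≤ k ≤ n+1` and `Im z ≠ 0`, the cyclic subspace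
`W = span{u, Nu, …, N^n u}` decomposes as
`W = exp(zN)·span{N^l u : 0 ≤ l ≤ n-k} ⊕ exp(z̄N)·span{N^l u : 0 ≤ l ≤ k-1}`. -/
theorem exp_nilpotent_cyclic_complement
    (V : Type) [AddCommGroup V] [Module ℂ V]
    (N : V →ₗ[ℂ] V) (hNnil : IsNilpotent N)
    (K : ℕ) (hK : N ^ K = 0)
    (E : ℂ → (V →ₗ[ℂ] V))
    (hE : ∀ z : ℂ,
      E z = ∑ j ∈ Finset.range K, (z ^ j / (j.factorial : ℂ)) • (N ^ j))
    (u : V) (n : ℕ) (hu : (N ^ n) u ≠ 0) (hu' : (N ^ (n + 1)) u = 0)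
    (k : ℕ) (hk : k ≤ n + 1) :
    ∀ z : ℂ, z.im ≠ 0 →
      Disjoint
        (Submodule.map (E z)
          (Submodule.span ℂ (Set.range fun l : Fin (n + 1 - k) => (N ^ (l : ℕ)) u)))
        (Submodule.map (E (starRingEnd ℂ z))
          (Submodule.span ℂ (Set.range fun l : Fin k => (N ^ (l : ℕ)) u))) ∧
      Submodule.map (E z)
          (Submodule.span ℂ (Set.range fun l : Fin (n + 1 - k) => (N ^ (l : ℕ)) u)) ⊔
        Submodule.map (E (starRingEnd ℂ z))
          (Submodule.span ℂ (Set.range fun l : Fin k => (N ^ (l : ℕ)) u)) =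
      Submodule.span ℂ (Set.range fun l : Fin (n + 1) => (N ^ (l : ℕ)) u) :=
  exp_nilpotent_cyclic_complement_general V N K hK E hE u n hu hu' k hk
end
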